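/- arXiv:2111.06543 — 9 statements merged into one kernel-verified Lean document; each statement's English description precedes it below -/
import Mathlib

section
/- Let δ > 0 and let M : ℝ × ℝ → ℝ be a smoothed maximum function as in the context. Then: (a) max(u,v) ≤ M(u,v) ≤ max(u,v) + δ for all u, v ∈ ℝ; (b) M is nondecreasing in each of its two variables; (c) the partial derivatives satisfy 0 ≤ ∂M/∂u(u,v) ≤ 1 and 0 ≤ ∂M/∂v(u,v) ≤ 1 at every point; (d) ∂M/∂u(u,v) + ∂M/∂v(u,v) = 1 at every point. -/
/-!
Each slice `t ↦ M (t, v)` is convex and equal to `v` for `t ≤ v - δ`, hence nondecreasing; by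
symmetry so is `t ↦ M (u, t)`. This gives `v ≤ M (u, v)` and symmetrically `max u v ≤ M (u, v)`,
while `M (u, v) ≤ M (m, m) = M (0, 0) + m` for `m = max u v`, and `M (0, 0) ≤ δ` by convexity at
the midpoint of `(δ, -δ)` and `(-δ, δ)`. Monotone directions have nonnegative derivatives, and
the shift law makes the derivative along `(1, 1)` equal to `1`; together these bound the partial
derivatives and fix their sum.
-/

open Set

theorem ConvexOn.monotone_of_const_on_Iic {f : ℝ → ℝ} {a c : ℝ} (hf : ConvexOn ℝ univ f)
    (hconst : ∀ s ≤ a, f s = c) : Monotone f := by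
  intro x y hxy
  rcases hxy.eq_or_lt with rfl | hxy
  · rfl
  set s := min x a - 1
  have hsx : s < x := by linarith [min_le_left x a]
  have hsa : s ≤ a := by linarith [min_le_right x a]
  have hleft := hf.slope_mono_adjacent (mem_univ (s - 1)) (mem_univ x) (sub_one_lt s) hsx
  have hright := hf.slope_mono_adjacent (mem_univ s) (mem_univ y) hsx hxy
  rw [hconst s hsa] at hleft hright
  rw [hconst (s - 1) (by linarith), sub_self, zero_div] at hleft
  have := (le_div_iff₀ (sub_pos.2 hxy)).1 (hleft.trans hright)
  linarith

theorem fderiv_apply_nonneg_of_monotone {E : Type*} [NormedAddCommGroup E] [NormedSpace ℝ E]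
    {f : E → ℝ} {x w : E} (hf : DifferentiableAt ℝ f x)
    (hmono : Monotone fun t : ℝ => f (x + t • w)) : 0 ≤ fderiv ℝ f x w :=
  (hf.hasFDerivAt.hasLineDerivAt w).nonneg_of_monotone hmono

namespace SmoothedMax

variable {δ : ℝ} {M : ℝ × ℝ → ℝ}

theorem apply_of_le_sub (hδ : 0 < δ) (hM_max : ∀ u v : ℝ, δ ≤ |u - v| → M (u, v) = max u v)
    {s v : ℝ} (hs : s ≤ v - δ) : M (s, v) = v := by
  rw [hM_max s v (by rw [abs_of_nonpos (by linarith)]; linarith), max_eq_right (by linarith)]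

theorem monotone_fst (hδ : 0 < δ) (hM_convex : ConvexOn ℝ univ M)
    (hM_max : ∀ u v : ℝ, δ ≤ |u - v| → M (u, v) = max u v) (v : ℝ) :
    Monotone fun t => M (t, v) := by
  have hconvex : ConvexOn ℝ univ fun t => M (t, v) := by
    simpa [Function.comp_def, AffineMap.lineMap_apply] using
      hM_convex.comp_affineMap (AffineMap.lineMap (0, v) (1, v))
  exact hconvex.monotone_of_const_on_Iic fun s => apply_of_le_sub hδ hM_max

theorem monotone_snd (hδ : 0 < δ) (hM_convex : ConvexOn ℝ univ M)
    (hM_max : ∀ u v : ℝ, δ ≤ |u - v| → M (u, v) = max u v)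
    (hM_symm : ∀ u v : ℝ, M (u, v) = M (v, u)) (u : ℝ) :
    Monotone fun t => M (u, t) := by
  simpa only [hM_symm u] using monotone_fst hδ hM_convex hM_max u

theorem right_le_apply (hδ : 0 < δ) (hM_convex : ConvexOn ℝ univ M)
    (hM_max : ∀ u v : ℝ, δ ≤ |u - v| → M (u, v) = max u v) (u v : ℝ) :
    v ≤ M (u, v) := by
  set s := min u (v - δ)
  calc v = M (s, v) := (apply_of_le_sub hδ hM_max (min_le_right u (v - δ))).symm
    _ ≤ M (u, v) := monotone_fst hδ hM_convex hM_max v (min_le_left u (v - δ))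

theorem max_le_apply (hδ : 0 < δ) (hM_convex : ConvexOn ℝ univ M)
    (hM_max : ∀ u v : ℝ, δ ≤ |u - v| → M (u, v) = max u v)
    (hM_symm : ∀ u v : ℝ, M (u, v) = M (v, u)) (u v : ℝ) :
    max u v ≤ M (u, v) :=
  max_le (hM_symm u v ▸ right_le_apply hδ hM_convex hM_max v u)
    (right_le_apply hδ hM_convex hM_max u v)

theorem apply_zero_zero_le (hδ : 0 < δ) (hM_convex : ConvexOn ℝ univ M)
    (hM_max : ∀ u v : ℝ, δ ≤ |u - v| → M (u, v) = max u v) :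
    M (0, 0) ≤ δ := by
  have hmid : (1 / 2 : ℝ) • (δ, -δ) + (1 / 2 : ℝ) • (-δ, δ) = (0, 0) := by
    ext <;> simp
  have h := hM_convex.2 (mem_univ (δ, -δ)) (mem_univ (-δ, δ))
    (by norm_num : (0 : ℝ) ≤ 1 / 2) (by norm_num : (0 : ℝ) ≤ 1 / 2) (by norm_num)
  rw [hmid, hM_max δ (-δ) (by rw [abs_of_nonneg (by linarith)]; linarith),
    hM_max (-δ) δ (by rw [abs_of_nonpos (by linarith)]; linarith),
    max_eq_left (by linarith), max_eq_right (by linarith)] at h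
  simp only [smul_eq_mul] at h
  linarith

theorem apply_le_max_add (hδ : 0 < δ) (hM_convex : ConvexOn ℝ univ M)
    (hM_max : ∀ u v : ℝ, δ ≤ |u - v| → M (u, v) = max u v)
    (hM_shift : ∀ u v a : ℝ, M (u + a, v + a) = M (u, v) + a)
    (hM_symm : ∀ u v : ℝ, M (u, v) = M (v, u)) (u v : ℝ) :
    M (u, v) ≤ max u v + δ := by
  set m := max u v
  calc M (u, v) ≤ M (m, v) := monotone_fst hδ hM_convex hM_max v (le_max_left u v)
    _ ≤ M (m, m) := monotone_snd hδ hM_convex hM_max hM_symm m (le_max_right u v)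
    _ = M (0, 0) + m := by simpa using hM_shift 0 0 m
    _ ≤ m + δ := by linarith [apply_zero_zero_le hδ hM_convex hM_max]

theorem fderiv_apply_one_one (hM_shift : ∀ u v a : ℝ, M (u + a, v + a) = M (u, v) + a)
    {x : ℝ × ℝ} (hM : DifferentiableAt ℝ M x) : fderiv ℝ M x (1, 1) = 1 := by
  obtain ⟨u, v⟩ := x
  have hdiag : HasLineDerivAt ℝ M 1 (u, v) (1, 1) := by
    have : (fun t : ℝ => M ((u, v) + t • (1, 1))) = fun t => M (u, v) + t :=
      funext fun t => by simpa using hM_shift u v t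
    rw [HasLineDerivAt, this]
    exact (hasDerivAt_id' 0).const_add _
  exact (hM.hasFDerivAt.hasLineDerivAt (1, 1)).unique hdiag

end SmoothedMax

open SmoothedMax

/-- Basic properties of a smoothed maximum function `M`:
it lies between `max` and `max + δ`, is nondecreasing in each variable,
its partial derivatives lie in `[0,1]`, and they sum to `1`. -/
theorem stmt_0 (δ : ℝ) (hδ : 0 < δ) (M : ℝ × ℝ → ℝ)
    (hM_smooth : ContDiff ℝ (⊤ : ℕ∞) M)
    (hM_convex : ConvexOn ℝ Set.univ M)
    (hM_max : ∀ u v : ℝ, δ ≤ |u - v| → M (u, v) = max u v)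
    (hM_shift : ∀ u v a : ℝ, M (u + a, v + a) = M (u, v) + a)
    (hM_symm : ∀ u v : ℝ, M (u, v) = M (v, u)) :
    (∀ u v : ℝ, max u v ≤ M (u, v) ∧ M (u, v) ≤ max u v + δ) ∧
    (∀ u u' v : ℝ, u ≤ u' → M (u, v) ≤ M (u', v)) ∧
    (∀ u v v' : ℝ, v ≤ v' → M (u, v) ≤ M (u, v')) ∧
    (∀ u v : ℝ,
      0 ≤ fderiv ℝ M (u, v) (1, 0) ∧ fderiv ℝ M (u, v) (1, 0) ≤ 1 ∧
      0 ≤ fderiv ℝ M (u, v) (0, 1) ∧ fderiv ℝ M (u, v) (0, 1) ≤ 1) ∧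
    (∀ u v : ℝ, fderiv ℝ M (u, v) (1, 0) + fderiv ℝ M (u, v) (0, 1) = 1) := by
  have hdiff : Differentiable ℝ M := hM_smooth.differentiable (by simp)
  have mono_fst := monotone_fst hδ hM_convex hM_max
  have mono_snd := monotone_snd hδ hM_convex hM_max hM_symm
  have nonneg_fst (u v : ℝ) : 0 ≤ fderiv ℝ M (u, v) (1, 0) :=
    fderiv_apply_nonneg_of_monotone (hdiff _) <| by
      simpa [Function.comp_def] using (mono_fst v).comp (monotone_id.const_add u)
  have nonneg_snd (u v : ℝ) : 0 ≤ fderiv ℝ M (u, v) (0, 1) :=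
    fderiv_apply_nonneg_of_monotone (hdiff _) <| by
      simpa [Function.comp_def] using (mono_snd u).comp (monotone_id.const_add v)
  have sum_eq (u v : ℝ) : fderiv ℝ M (u, v) (1, 0) + fderiv ℝ M (u, v) (0, 1) = 1 := by
    rw [← map_add, Prod.mk_add_mk, zero_add, add_zero, fderiv_apply_one_one hM_shift (hdiff _)]
  refine ⟨fun u v => ⟨max_le_apply hδ hM_convex hM_max hM_symm u v,
      apply_le_max_add hδ hM_convex hM_max hM_shift hM_symm u v⟩,
    fun u u' v h => mono_fst v h, fun u v v' h => mono_snd u h,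
    fun u v => ⟨nonneg_fst u v, ?_, nonneg_snd u v, ?_⟩, sum_eq⟩
  all_goals linarith [sum_eq u v, nonneg_fst u v, nonneg_snd u v]
end

section
/- Let N ≥ 1 be an integer and let A be a real N × N matrix such that A_{ii} ≥ 2 for all i and A_{ij} + A_{ji} = 2 for all i ≠ j. Then vᵀ A v > 0 for every nonzero vector v ∈ ℝ^N; in particular, A is invertible. -/
/-!
The quadratic form `vᵀ A v` depends only on `A + Aᵀ`, and the hypotheses say that
`A + Aᵀ = diag (2 (A i i - 1)) + 2 J` with `J` the all-ones matrix. Hence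
`vᵀ A v = ∑ i, (A i i - 1) v_i² + (∑ i, v_i)²`, which is positive for `v ≠ 0` since `A i i > 1`.
A vector in the kernel of `A` would make the form vanish, so `A` is invertible.
-/

open Matrix

section
variable {ι K : Type*}

theorem Matrix.add_transpose_eq_diagonal_add_of_const [CommRing K] [DecidableEq ι]
    {A : Matrix ι ι K} {c : K} (hoff : ∀ i j, i ≠ j → A i j + A j i = 2 * c) :
    A + Aᵀ = diagonal (fun i => 2 * (A i i - c)) + of fun _ _ => 2 * c := by
  ext i j
  by_cases hij : i = j
  · subst hij
    simp only [add_apply, transpose_apply, diagonal_apply_eq, of_apply]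
    ring
  · simp [hij, hoff i j hij]

variable [Fintype ι]

theorem Matrix.dotProduct_diagonal_mulVec_self [CommRing K] [DecidableEq ι] (d v : ι → K) :
    v ⬝ᵥ diagonal d *ᵥ v = ∑ i, d i * v i ^ 2 := by
  simp only [mulVec_diagonal, dotProduct]
  exact Finset.sum_congr rfl fun i _ => by ring

theorem Matrix.dotProduct_of_const_mulVec_self [CommRing K] (a : K) (v : ι → K) :
    v ⬝ᵥ (of fun _ _ => a : Matrix ι ι K) *ᵥ v = a * (∑ i, v i) ^ 2 := by
  simp only [dotProduct, mulVec, of_apply, ← Finset.mul_sum, ← Finset.sum_mul, sq]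
  ring

theorem Matrix.dotProduct_mulVec_self_eq_of_add_transpose [Field K] [CharZero K]
    {A : Matrix ι ι K} {c : K} (hoff : ∀ i j, i ≠ j → A i j + A j i = 2 * c) (v : ι → K) :
    v ⬝ᵥ A *ᵥ v = ∑ i, (A i i - c) * v i ^ 2 + c * (∑ i, v i) ^ 2 := by
  classical
  have h := congrArg (fun M => v ⬝ᵥ M *ᵥ v) (add_transpose_eq_diagonal_add_of_const hoff)
  simp only [add_mulVec, dotProduct_add, dotProduct_transpose_mulVec,
    dotProduct_diagonal_mulVec_self, dotProduct_of_const_mulVec_self] at h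
  simp only [mul_assoc, ← Finset.mul_sum] at h
  linear_combination h / 2

theorem Matrix.dotProduct_mulVec_self_pos_of_add_transpose [Field K] [LinearOrder K]
    [IsStrictOrderedRing K] {A : Matrix ι ι K} {c : K} (hc : 0 ≤ c) (hdiag : ∀ i, c < A i i)
    (hoff : ∀ i j, i ≠ j → A i j + A j i = 2 * c) {v : ι → K} (hv : v ≠ 0) :
    0 < v ⬝ᵥ A *ᵥ v := by
  rw [dotProduct_mulVec_self_eq_of_add_transpose hoff]
  obtain ⟨k, hk⟩ := Function.ne_iff.mp hv
  have hdiag_pos : 0 < ∑ i, (A i i - c) * v i ^ 2 :=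
    Finset.sum_pos' (fun i _ => mul_nonneg (sub_nonneg.2 (hdiag i).le) (sq_nonneg _))
      ⟨k, Finset.mem_univ k, mul_pos (sub_pos.2 (hdiag k)) (pow_two_pos_of_ne_zero hk)⟩
  positivity

theorem Matrix.isUnit_of_dotProduct_mulVec_self_pos [Field K] [LinearOrder K] [DecidableEq ι]
    {A : Matrix ι ι K} (hA : ∀ v ≠ 0, 0 < v ⬝ᵥ A *ᵥ v) : IsUnit A := by
  rw [isUnit_iff_isUnit_det, isUnit_iff_ne_zero]
  intro hdet
  obtain ⟨v, hv, hAv⟩ := exists_mulVec_eq_zero_iff.mpr hdet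
  simpa [hAv] using hA v hv

end

theorem stmt_2_general (N : ℕ) (A : Matrix (Fin N) (Fin N) ℝ)
    (hdiag : ∀ i, 2 ≤ A i i)
    (hoff : ∀ i j, i ≠ j → A i j + A j i = 2) :
    (∀ v : Fin N → ℝ, v ≠ 0 → 0 < ∑ i, ∑ j, A i j * v i * v j) ∧ IsUnit A := by
  have hpos : ∀ v ≠ 0, 0 < v ⬝ᵥ A *ᵥ v := fun v hv =>
    dotProduct_mulVec_self_pos_of_add_transpose zero_le_one
      (fun i => one_lt_two.trans_le (hdiag i)) (by simpa using hoff) hv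
  refine ⟨fun v hv => ?_, isUnit_of_dotProduct_mulVec_self_pos hpos⟩
  convert hpos v hv using 1
  simp only [dotProduct, mulVec, Finset.mul_sum]
  exact Finset.sum_congr rfl fun i _ => Finset.sum_congr rfl fun j _ => by ring

/-- If a real `N × N` matrix has diagonal entries `≥ 2` and
`A_{ij} + A_{ji} = 2` for `i ≠ j`, then its quadratic form is positive definite
and `A` is invertible. -/
theorem stmt_2 (N : ℕ) (hN : 1 ≤ N) (A : Matrix (Fin N) (Fin N) ℝ)
    (hdiag : ∀ i, 2 ≤ A i i)
    (hoff : ∀ i j, i ≠ j → A i j + A j i = 2) :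
    (∀ v : Fin N → ℝ, v ≠ 0 → 0 < ∑ i, ∑ j, A i j * v i * v j) ∧ IsUnit A :=
  stmt_2_general N A hdiag hoff
end

section
/- Let δ > 0, let M be a smoothed maximum function as in the context, and let N ≥ 1 be an integer. Define, for ρ = (ρ₁,…,ρ_N) ∈ ℝ^N, φ_i(ρ) = Σ_{j≠i} M(2ρ_i, 2ρ_j) + 2ρ_i and Φ(ρ) = Σ_{i=1}^N exp(φ_i(ρ)). Then Φ is a strictly convex function on ℝ^N. -/
/-!
Write `Φ = ∑ᵢ exp ∘ φᵢ` with `φᵢ ρ = smaxExponent M i (2 • ρ)`. Each `φᵢ` is convex because `M`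
is, and `exp` is strictly convex and increasing, so `Φ` is strictly convex as soon as
`ρ ↦ (φᵢ ρ)ᵢ` is injective.

For injectivity, `M` is monotone: each slice `v ↦ M (u, v)` is convex and constant for `v ≪ u`.
Hence for `d = x - y` the increments `Δᵢⱼ = M (xᵢ, xⱼ) - M (yᵢ, yⱼ)` lie between `dᵢ` and `dⱼ`;
they are symmetric, `Δᵢᵢ = dᵢ` by translation equivariance, and `φ x = φ y` says that every row
of `Δ` sums to zero. Comparing the rows at a maximal and at a minimal coordinate of `d` forces
`d` to be constant, hence zero.
-/

open Finset Function Set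

theorem StrictConvexOn.sum_comp_of_injOn {E ι : Type*} [AddCommGroup E] [Module ℝ E] [Fintype ι]
    {s : Set E} {g : ℝ → ℝ} {f : ι → E → ℝ} (hs : Convex ℝ s) (hg : StrictConvexOn ℝ univ g)
    (hg_mono : Monotone g) (hf : ∀ i, ConvexOn ℝ s (f i)) (hinj : s.InjOn fun x i => f i x) :
    StrictConvexOn ℝ s fun x => ∑ i, g (f i x) := by
  refine ⟨hs, fun x hx y hy hxy a b ha hb hab => ?_⟩
  obtain ⟨i, hi⟩ : ∃ i, f i x ≠ f i y := by
    by_contra! h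
    exact hxy (hinj hx hy (funext h))
  have hcomp : ∀ j, g (f j (a • x + b • y)) ≤ g (a * f j x + b * f j y) := fun j =>
    hg_mono ((hf j).2 hx hy ha.le hb.le hab)
  simp only [smul_eq_mul, mul_sum, ← sum_add_distrib]
  refine sum_lt_sum (fun j _ => ?_) ⟨i, mem_univ i, ?_⟩
  · exact (hcomp j).trans (hg.convexOn.2 (mem_univ _) (mem_univ _) ha.le hb.le hab)
  · exact (hcomp i).trans_lt (hg.2 (mem_univ _) (mem_univ _) hi ha hb hab)

theorem ConvexOn.monotone_of_constant_on_Iic {f : ℝ → ℝ} (hf : ConvexOn ℝ univ f) {c : ℝ}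
    (hc : ∀ x ≤ c, f x = f c) : Monotone f := by
  intro a b hab
  set w := min a c - 1
  have hw : w < a := by linarith [min_le_left a c]
  have hfw : f w ≤ f a :=
    hf.le_right_of_left_le'' (mem_univ (w - 1)) (mem_univ a) (by linarith) hw.le
      (by rw [hc w (by linarith [min_le_right a c]), hc (w - 1) (by linarith [min_le_right a c])])
  exact hf.le_right_of_left_le'' (mem_univ w) (mem_univ b) hw hab hfw

theorem eq_zero_of_row_sums_eq_zero {ι : Type*} [Fintype ι] {d : ι → ℝ} {Δ : ι → ι → ℝ}
    (hΔ_symm : ∀ i j, Δ i j = Δ j i) (hΔ_ge : ∀ i j, min (d i) (d j) ≤ Δ i j)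
    (hΔ_le : ∀ i j, Δ i j ≤ max (d i) (d j)) (hΔ_sum : ∀ i, ∑ j, Δ i j = 0) : d = 0 := by
  cases isEmpty_or_nonempty ι
  · exact Subsingleton.elim _ _
  obtain ⟨p, hp⟩ := Finite.exists_max d
  obtain ⟨q, hq⟩ := Finite.exists_min d
  have hp_ge : ∀ j, d j ≤ Δ p j := fun j =>
    (min_eq_right (hp j)).ge.trans (hΔ_ge p j)
  have hq_le : ∀ j, Δ q j ≤ d j := fun j =>
    (hΔ_le q j).trans (max_eq_right (hq j)).le
  have hrows : ∀ j, Δ p j = Δ q j := by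
    have h := (sum_eq_zero_iff_of_nonneg fun j _ => sub_nonneg.2 ((hq_le j).trans (hp_ge j))).1
      (by rw [sum_sub_distrib, hΔ_sum, hΔ_sum, sub_zero])
    exact fun j => sub_eq_zero.1 (h j (mem_univ j))
  have hp_eq : ∀ j, Δ p j = d j := fun j => le_antisymm (hrows j ▸ hq_le j) (hp_ge j)
  have hq_eq : ∀ j, Δ q j = d j := fun j => hrows j ▸ hp_eq j
  have hconst : ∀ j, d j = d p := fun j => le_antisymm (hp j) <|
    calc d p = Δ p q := by rw [← hq_eq p, hΔ_symm]
      _ = d q := hp_eq q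
      _ ≤ d j := hq j
  have hsum := hΔ_sum p
  simp only [hp_eq, hconst, sum_const, card_univ, nsmul_eq_mul, mul_eq_zero,
    Nat.cast_eq_zero, Fintype.card_ne_zero, false_or] at hsum
  exact funext fun j => (hconst j).trans hsum

section SmoothedMax

variable {δ : ℝ} {M : ℝ × ℝ → ℝ}

theorem monotone_smax_right (hM_convex : ConvexOn ℝ univ M)
    (hM_max : ∀ u v : ℝ, δ ≤ |u - v| → M (u, v) = max u v) (u : ℝ) :
    Monotone fun v => M (u, v) := by
  have hslice : ConvexOn ℝ univ fun v => M (u, v) := by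
    refine ⟨convex_univ, fun x _ y _ a b ha hb hab => ?_⟩
    have h := hM_convex.2 (mem_univ (u, x)) (mem_univ (u, y)) ha hb hab
    rwa [Prod.smul_mk, Prod.smul_mk, Prod.mk_add_mk, ← add_smul, hab, one_smul] at h
  have hfar : ∀ v ≤ u - |δ|, M (u, v) = u := fun v hv => by
    have := abs_nonneg δ
    rw [hM_max u v (by rw [abs_of_nonneg (by linarith)]; linarith [le_abs_self δ]),
      max_eq_left (by linarith)]
  exact hslice.monotone_of_constant_on_Iic fun v hv => (hfar v hv).trans (hfar _ le_rfl).symm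

theorem monotone_smax (hM_convex : ConvexOn ℝ univ M)
    (hM_max : ∀ u v : ℝ, δ ≤ |u - v| → M (u, v) = max u v)
    (hM_symm : ∀ u v : ℝ, M (u, v) = M (v, u)) : Monotone M := by
  rintro ⟨u, v⟩ ⟨u', v'⟩ ⟨hu, hv⟩
  calc M (u, v) ≤ M (u, v') := monotone_smax_right hM_convex hM_max u hv
    _ = M (v', u) := hM_symm u v'
    _ ≤ M (v', u') := monotone_smax_right hM_convex hM_max v' hu
    _ = M (u', v') := hM_symm v' u'

end SmoothedMax

section ShiftEquivariant

variable {M : ℝ × ℝ → ℝ} (hM_mono : Monotone M)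
  (hM_shift : ∀ u v a : ℝ, M (u + a, v + a) = M (u, v) + a)
include hM_mono hM_shift

theorem le_smax_add_add (u v a b : ℝ) : M (u, v) + min a b ≤ M (u + a, v + b) := by
  rw [← hM_shift]
  exact hM_mono ⟨by simp, by simp⟩

theorem smax_add_add_le (u v a b : ℝ) : M (u + a, v + b) ≤ M (u, v) + max a b := by
  rw [← hM_shift]
  exact hM_mono ⟨by simp, by simp⟩

end ShiftEquivariant

section Exponent

variable {ι : Type*} [Fintype ι] [DecidableEq ι] {M : ℝ × ℝ → ℝ}

def smaxExponent (M : ℝ × ℝ → ℝ) (i : ι) (u : ι → ℝ) : ℝ :=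
  ∑ j ∈ univ.erase i, M (u i, u j) + u i

theorem convexOn_smaxExponent (hM_convex : ConvexOn ℝ univ M) (i : ι) :
    ConvexOn ℝ univ (smaxExponent M i) := by
  refine ⟨convex_univ, fun x _ y _ a b ha hb hab => ?_⟩
  have hterm : ∀ j, M ((a • x + b • y) i, (a • x + b • y) j)
      ≤ a * M (x i, x j) + b * M (y i, y j) := fun j =>
    hM_convex.2 (mem_univ (x i, x j)) (mem_univ (y i, y j)) ha hb hab
  calc smaxExponent M i (a • x + b • y)
      ≤ ∑ j ∈ univ.erase i, (a * M (x i, x j) + b * M (y i, y j)) + (a * x i + b * y i) :=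
        add_le_add (sum_le_sum fun j _ => hterm j) le_rfl
    _ = a • smaxExponent M i x + b • smaxExponent M i y := by
        simp only [smaxExponent, smul_eq_mul, sum_add_distrib, mul_add, mul_sum]
        ring

theorem smaxExponent_sub_smaxExponent (hM_shift : ∀ u v a : ℝ, M (u + a, v + a) = M (u, v) + a)
    (x y : ι → ℝ) (i : ι) :
    smaxExponent M i x - smaxExponent M i y = ∑ j, (M (x i, x j) - M (y i, y j)) := by
  have hdiag : M (x i, x i) - M (y i, y i) = x i - y i := by
    have h := hM_shift (y i) (y i) (x i - y i)
    rw [add_sub_cancel] at h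
    linarith
  rw [← add_sum_erase _ _ (mem_univ i), hdiag, smaxExponent, smaxExponent, sum_sub_distrib]
  ring

theorem smaxExponent_injective (hM_mono : Monotone M)
    (hM_shift : ∀ u v a : ℝ, M (u + a, v + a) = M (u, v) + a)
    (hM_symm : ∀ u v : ℝ, M (u, v) = M (v, u)) :
    Injective fun (u : ι → ℝ) i => smaxExponent M i u := by
  intro x y hxy
  have hx : ∀ i, x i = y i + (x - y) i := fun i => by simp
  refine sub_eq_zero.1 (eq_zero_of_row_sums_eq_zero
    (Δ := fun i j => M (x i, x j) - M (y i, y j)) (fun i j => ?_) (fun i j => ?_) (fun i j => ?_)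
    fun i => ?_)
  · rw [hM_symm (x i), hM_symm (y i)]
  · rw [hx i, hx j, le_sub_iff_add_le']
    exact le_smax_add_add hM_mono hM_shift _ _ _ _
  · rw [hx i, hx j, sub_le_iff_le_add']
    exact smax_add_add_le hM_mono hM_shift _ _ _ _
  · rw [← smaxExponent_sub_smaxExponent hM_shift]
    exact sub_eq_zero.2 (congrFun hxy i)

end Exponent

theorem stmt_4_general (δ : ℝ) (M : ℝ × ℝ → ℝ)
    (hM_convex : ConvexOn ℝ Set.univ M)
    (hM_max : ∀ u v : ℝ, δ ≤ |u - v| → M (u, v) = max u v)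
    (hM_shift : ∀ u v a : ℝ, M (u + a, v + a) = M (u, v) + a)
    (hM_symm : ∀ u v : ℝ, M (u, v) = M (v, u))
    (N : ℕ) :
    StrictConvexOn ℝ Set.univ (fun ρ : Fin N → ℝ =>
      ∑ i, Real.exp ((∑ j ∈ Finset.univ.erase i, M (2 * ρ i, 2 * ρ j)) + 2 * ρ i)) := by
  have hinj : Injective fun (ρ : Fin N → ℝ) i => smaxExponent M i ((2 : ℝ) • ρ) :=
    (smaxExponent_injective (monotone_smax hM_convex hM_max hM_symm) hM_shift hM_symm).comp
      (smul_right_injective _ two_ne_zero)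
  exact StrictConvexOn.sum_comp_of_injOn (f := fun i ρ => smaxExponent M i ((2 : ℝ) • ρ))
    convex_univ strictConvexOn_exp Real.exp_monotone
    (fun i => (convexOn_smaxExponent hM_convex i).comp_linearMap (LinearMap.lsmul ℝ _ 2))
    hinj.injOn

/-- The Kähler potential
`Φ(ρ) = Σᵢ exp(Σ_{j≠i} M(2ρᵢ, 2ρⱼ) + 2ρᵢ)` built from a smoothed maximum `M`
is strictly convex on `ℝ^N`. -/
theorem stmt_4 (δ : ℝ) (hδ : 0 < δ) (M : ℝ × ℝ → ℝ)
    (hM_smooth : ContDiff ℝ (⊤ : ℕ∞) M)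
    (hM_convex : ConvexOn ℝ Set.univ M)
    (hM_max : ∀ u v : ℝ, δ ≤ |u - v| → M (u, v) = max u v)
    (hM_shift : ∀ u v a : ℝ, M (u + a, v + a) = M (u, v) + a)
    (hM_symm : ∀ u v : ℝ, M (u, v) = M (v, u))
    (N : ℕ) (hN : 1 ≤ N) :
    StrictConvexOn ℝ Set.univ (fun ρ : Fin N → ℝ =>
      ∑ i, Real.exp ((∑ j ∈ Finset.univ.erase i, M (2 * ρ i, 2 * ρ j)) + 2 * ρ i)) :=
  stmt_4_general δ M hM_convex hM_max hM_shift hM_symm N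
end

section
/- Let N ≥ 2 be an integer, δ > 0, ℓ ∈ {1,…,N}, and let r₁,…,r_N be positive real numbers. If either r_ℓ ≥ e^{(N−1)δ/4} · (∏_{i=1}^N r_i)^{1/N} or r_ℓ ≥ e^{(N−1)δ/2} · min_{1≤i≤N} r_i, then ℓ lies above a δ-gap for (r₁,…,r_N). -/
/-!
Pass to logarithms `x i = log (r i)`: a `δ`-gap for `r` is a partition on which `x` jumps by at
least `δ / 2`. If `ℓ` lies above no such gap, then above every value `x i < x ℓ` there is another
value within `δ / 2`, so walking up from `x i` to `x ℓ` shows `x ℓ - x i < (δ / 2) · c i`, where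
`c i` counts the values strictly above `x i`. Since `c i ≤ N - 1` and `∑ c i ≤ N (N - 1) / 2`
(each pair is counted at most once), neither hypothesis can hold.
-/

open Finset Real

section Gap

variable {ι : Type*} [Fintype ι]

def IsAboveGap [DecidableEq ι] (x : ι → ℝ) (ε : ℝ) (ℓ : ι) : Prop :=
  ∃ J : Finset ι, ℓ ∈ J ∧ Jᶜ.Nonempty ∧ ∀ j ∈ J, ∀ k ∈ Jᶜ, x k + ε ≤ x j

noncomputable def countAbove (x : ι → ℝ) (i : ι) : ℕ := #{m | x i < x m}

variable {x : ι → ℝ} {ε : ℝ} {ℓ : ι}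

theorem countAbove_lt_of_lt {i j : ι} (hij : x i < x j) : countAbove x j < countAbove x i := by
  refine card_lt_card <| (ssubset_iff_of_subset fun m hm => ?_).2 ⟨j, ?_, ?_⟩
  · simp only [mem_filter, mem_univ, true_and] at hm ⊢
    exact hij.trans hm
  · simpa using hij
  · simp

theorem countAbove_add_card_filter_lt_le (i : ι) :
    countAbove x i + #{m | x m < x i} ≤ Fintype.card ι - 1 := by
  classical
  rw [countAbove, ← card_union_of_disjoint (disjoint_filter.2 fun m _ h => h.not_gt),
    ← filter_or, ← card_univ, ← card_erase_of_mem (mem_univ i)]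
  exact card_le_card fun m hm => mem_erase.2 ⟨by rintro rfl; simp at hm, mem_univ m⟩

theorem countAbove_le (i : ι) : countAbove x i ≤ Fintype.card ι - 1 :=
  (Nat.le_add_right _ _).trans (countAbove_add_card_filter_lt_le i)

theorem two_mul_sum_countAbove_le :
    2 * ∑ i, countAbove x i ≤ Fintype.card ι * (Fintype.card ι - 1) := by
  have hswap : ∑ i, countAbove x i = ∑ i, #{m | x m < x i} := by
    simp only [countAbove, card_filter]
    exact sum_comm
  calc 2 * ∑ i, countAbove x i = ∑ i, (countAbove x i + #{m | x m < x i}) := by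
        rw [sum_add_distrib, ← hswap, two_mul]
    _ ≤ ∑ _i : ι, (Fintype.card ι - 1) := sum_le_sum fun i _ => countAbove_add_card_filter_lt_le i
    _ = Fintype.card ι * (Fintype.card ι - 1) := by simp

variable [DecidableEq ι]

theorem exists_lt_lt_add_of_not_isAboveGap (hgap : ¬IsAboveGap x ε ℓ) {i : ι} (hi : x i < x ℓ) :
    ∃ j, x i < x j ∧ x j < x i + ε := by
  by_contra! hdense
  refine hgap ⟨({m | x i < x m} : Finset ι), by simpa using hi, ⟨i, by simp⟩, fun j hj k hk => ?_⟩
  simp only [mem_compl, mem_filter, mem_univ, true_and, not_lt] at hj hk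
  linarith [hdense j hj]

theorem sub_lt_mul_countAbove (hgap : ¬IsAboveGap x ε ℓ) {i : ι} (hi : x i < x ℓ) :
    x ℓ - x i < ε * countAbove x i := by
  induction hc : countAbove x i using Nat.strong_induction_on generalizing i with
  | _ n ih =>
  obtain ⟨j, hij, hjε⟩ := exists_lt_lt_add_of_not_isAboveGap hgap hi
  have hcount : (countAbove x j : ℝ) + 1 ≤ n := by
    exact_mod_cast hc ▸ countAbove_lt_of_lt hij
  rcases lt_or_ge (x j) (x ℓ) with hjℓ | hℓj
  · have := ih _ (hc ▸ countAbove_lt_of_lt hij) hjℓ rfl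
    nlinarith
  · nlinarith [(countAbove x j).cast_nonneg (α := ℝ)]

variable (hgap : ¬IsAboveGap x ε ℓ) (hε : 0 < ε) (hcard : 1 < Fintype.card ι)
include hgap hε hcard

theorem sub_lt_mul_card_sub_one (i : ι) : x ℓ - x i < ε * (Fintype.card ι - 1) := by
  have hcard' : (1 : ℝ) < Fintype.card ι := by exact_mod_cast hcard
  rcases lt_or_ge (x i) (x ℓ) with hi | hi
  · have hle : (countAbove x i : ℝ) ≤ Fintype.card ι - 1 := by
      rw [← Nat.cast_one, ← Nat.cast_sub hcard.le]
      exact_mod_cast countAbove_le i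
    exact (sub_lt_mul_countAbove hgap hi).trans_le (mul_le_mul_of_nonneg_left hle hε.le)
  · nlinarith

theorem sum_sub_lt : ∑ i, (x ℓ - x i) < ε * (Fintype.card ι * (Fintype.card ι - 1) / 2) := by
  have hcard' : (1 : ℝ) < Fintype.card ι := by exact_mod_cast hcard
  have hle (i : ι) : x ℓ - x i ≤ ε * countAbove x i := by
    rcases lt_or_ge (x i) (x ℓ) with hi | hi
    · exact (sub_lt_mul_countAbove hgap hi).le
    · nlinarith [(countAbove x i).cast_nonneg (α := ℝ)]
  have hsum : ∑ i, ε * (countAbove x i : ℝ) ≤ ε * (Fintype.card ι * (Fintype.card ι - 1) / 2) := by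
    have : 2 * ∑ i, (countAbove x i : ℝ) ≤ Fintype.card ι * (Fintype.card ι - 1) := by
      have := Nat.cast_le (α := ℝ).2 (two_mul_sum_countAbove_le (x := x))
      push_cast [Nat.cast_sub hcard.le] at this
      exact this
    rw [← mul_sum]
    exact mul_le_mul_of_nonneg_left (by linarith) hε.le
  by_cases hbelow : ∃ i, x i < x ℓ
  · obtain ⟨i, hi⟩ := hbelow
    exact (sum_lt_sum (fun i _ => hle i) ⟨i, mem_univ i, sub_lt_mul_countAbove hgap hi⟩).trans_le hsum
  · push Not at hbelow
    have : ∑ i, (x ℓ - x i) ≤ 0 := sum_nonpos fun i _ => sub_nonpos.2 (hbelow i)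
    have : 0 < ε * (Fintype.card ι * (Fintype.card ι - 1) / 2) := by
      have : (0 : ℝ) < Fintype.card ι - 1 := by linarith
      positivity
    linarith

end Gap

theorem le_log_sub_log_of_exp_mul_le {a b c : ℝ} (ha : 0 < a) (h : exp c * a ≤ b) :
    c ≤ log b - log a := by
  have := log_le_log (by positivity) h
  rw [log_mul (exp_pos c).ne' ha.ne', log_exp] at this
  linarith

theorem card_mul_le_sum_log_sub_log {ι : Type*} [Fintype ι] {r : ι → ℝ} (hr : ∀ i, 0 < r i)
    {ℓ : ι} {c : ℝ} (h : exp c * (∏ i, r i) ^ ((1 : ℝ) / Fintype.card ι) ≤ r ℓ) :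
    Fintype.card ι * c ≤ ∑ i, (log (r ℓ) - log (r i)) := by
  have hN : (0 : ℝ) < Fintype.card ι := by exact_mod_cast Fintype.card_pos_iff.2 ⟨ℓ⟩
  have hprod : 0 < ∏ i, r i := prod_pos fun i _ => hr i
  have hlog := le_log_sub_log_of_exp_mul_le (by positivity) h
  rw [log_rpow hprod, log_prod fun i _ => (hr i).ne'] at hlog
  rw [sum_sub_distrib, sum_const, card_univ, nsmul_eq_mul]
  have := mul_le_mul_of_nonneg_left hlog hN.le
  rw [mul_sub, ← mul_assoc, mul_one_div_cancel hN.ne', one_mul] at this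
  exact this

theorem exp_mul_sq_le_sq_of_log_add_le {a b δ : ℝ} (ha : 0 < a) (hb : 0 < b)
    (h : log a + δ / 2 ≤ log b) : exp δ * a ^ 2 ≤ b ^ 2 := by
  have := exp_le_exp.2 (mul_le_mul_of_nonneg_left h zero_le_two)
  rwa [show 2 * (log a + δ / 2) = δ + log a + log a by ring, mul_comm, exp_mul, exp_log hb,
    exp_add, exp_add, exp_log ha, rpow_two, mul_assoc, ← sq] at this

/-- If `r_ℓ ≥ e^{(N−1)δ/4}·(∏ rᵢ)^{1/N}` or
`r_ℓ ≥ e^{(N−1)δ/2}·min rᵢ`, then `ℓ` lies above a `δ`-gap: there is a partition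
`{1,…,N} = K ⊔ J` with both parts nonempty, `ℓ ∈ J`, and
`min_{j∈J} rⱼ² ≥ e^δ·max_{k∈K} r_k²`. -/
theorem stmt_5 (N : ℕ) (hN : 2 ≤ N) (δ : ℝ) (hδ : 0 < δ)
    (ℓ : Fin N) (r : Fin N → ℝ) (hr : ∀ i, 0 < r i)
    (h : Real.exp (((N : ℝ) - 1) * δ / 4) * (∏ i, r i) ^ ((1 : ℝ) / N) ≤ r ℓ ∨
         Real.exp (((N : ℝ) - 1) * δ / 2) *
           Finset.univ.inf' ⟨⟨0, by omega⟩, Finset.mem_univ _⟩ r ≤ r ℓ) :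
    ∃ J : Finset (Fin N), ℓ ∈ J ∧ J.Nonempty ∧ Jᶜ.Nonempty ∧
      ∀ j ∈ J, ∀ k ∈ Jᶜ, Real.exp δ * r k ^ 2 ≤ r j ^ 2 := by
  suffices IsAboveGap (fun i => log (r i)) (δ / 2) ℓ by
    obtain ⟨J, hℓ, hJc, hgap⟩ := this
    exact ⟨J, hℓ, ⟨ℓ, hℓ⟩, hJc, fun j hj k hk =>
      exp_mul_sq_le_sq_of_log_add_le (hr k) (hr j) (hgap j hj k hk)⟩
  by_contra hgap
  have hcard : 1 < Fintype.card (Fin N) := by rw [Fintype.card_fin]; omega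
  rcases h with h | h
  · have hlow := card_mul_le_sum_log_sub_log hr (ι := Fin N) (by rwa [Fintype.card_fin])
    have hup := sum_sub_lt hgap (half_pos hδ) hcard
    simp only [Fintype.card_fin] at hlow hup
    linarith
  · obtain ⟨i, -, hi⟩ := exists_mem_eq_inf' ⟨⟨0, by omega⟩, mem_univ _⟩ r
    have hlow := le_log_sub_log_of_exp_mul_le (hr i) (hi ▸ h)
    have hup := sub_lt_mul_card_sub_one hgap (half_pos hδ) hcard i
    simp only [Fintype.card_fin] at hup
    linarith
end

section
/- Let N ≥ 2 be an integer, δ > 0, ℓ ∈ {1,…,N}, and let r₁,…,r_N be positive real numbers. If ℓ does not lie above any δ-gap for (r₁,…,r_N), then min_{1≤i≤N} r_i² > e^{−(N−1)δ} · r_ℓ² and ∏_{i=1}^N r_i² > e^{−N(N−1)δ/2} · r_ℓ^{2N}. -/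
/-!
Write `x = r²` and let `c i` be the number of indices `j` with `x i < x j`. If `x i < x ℓ`, the
indices strictly above `i` form a set containing `ℓ` which is not a `δ`-gap, so some `j` with
`x i < x j` has `x j < e^δ x i`; since `c j < c i`, strong induction on `c i` gives
`x i > e^{-c i δ} x ℓ`. As `c i ≤ N - 1` and `∑ c i ≤ N (N - 1) / 2` (a pair `i ≠ j` is counted at
most once), both bounds follow.
-/

open Finset Real

variable {ι : Type*} [Fintype ι]

-- `x` stands for the squared radii `r²`.
def IsGap [DecidableEq ι] (δ : ℝ) (x : ι → ℝ) (J : Finset ι) : Prop :=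
  J.Nonempty ∧ Jᶜ.Nonempty ∧ ∀ j ∈ J, ∀ k ∈ Jᶜ, exp δ * x k ≤ x j

def LiesAboveGap [DecidableEq ι] (δ : ℝ) (x : ι → ℝ) (ℓ : ι) : Prop :=
  ∃ J, ℓ ∈ J ∧ IsGap δ x J

noncomputable def numGreater (x : ι → ℝ) (i : ι) : ℕ := #{j | x i < x j}

section Counting

variable (x : ι → ℝ)

lemma numGreater_lt_numGreater {i j : ι} (hij : x i < x j) : numGreater x j < numGreater x i := by
  refine card_lt_card (ssubset_iff_of_subset ?_ |>.mpr ⟨j, ?_⟩)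
  · intro k hk
    simp only [mem_filter, mem_univ, true_and] at hk ⊢
    exact hij.trans hk
  · simpa using hij

lemma numGreater_add_card_lt_le (i : ι) :
    numGreater x i + #{j | x j < x i} ≤ Fintype.card ι - 1 := by
  classical
  rw [numGreater, ← card_union_of_disjoint (disjoint_filter.mpr fun j _ h h' => h.asymm h'),
    ← card_univ, ← card_erase_of_mem (mem_univ i)]
  refine card_le_card fun j hj => mem_erase.mpr ⟨?_, mem_univ j⟩
  rintro rfl
  simp at hj

lemma numGreater_le (i : ι) : numGreater x i ≤ Fintype.card ι - 1 :=
  (Nat.le_add_right _ _).trans (numGreater_add_card_lt_le x i)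

lemma two_mul_sum_numGreater_le :
    2 * ∑ i, numGreater x i ≤ Fintype.card ι * (Fintype.card ι - 1) := by
  have hswap : ∑ i, numGreater x i = ∑ i, #{j | x j < x i} := by
    simp only [numGreater, card_filter]
    exact sum_comm
  calc 2 * ∑ i, numGreater x i = ∑ i, (numGreater x i + #{j | x j < x i}) := by
        rw [sum_add_distrib, ← hswap, two_mul]
    _ ≤ ∑ _i : ι, (Fintype.card ι - 1) := sum_le_sum fun i _ => numGreater_add_card_lt_le x i
    _ = Fintype.card ι * (Fintype.card ι - 1) := by rw [sum_const, card_univ, smul_eq_mul]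

lemma sum_numGreater_le :
    (∑ i, numGreater x i : ℝ) ≤ Fintype.card ι * (Fintype.card ι - 1) / 2 := by
  rcases isEmpty_or_nonempty ι with hι | hι
  · simp
  have h : ((2 * ∑ i, numGreater x i : ℕ) : ℝ) ≤ (Fintype.card ι * (Fintype.card ι - 1) : ℕ) := by
    exact_mod_cast two_mul_sum_numGreater_le x
  push_cast [Nat.cast_sub (Fintype.card_pos : 1 ≤ Fintype.card ι)] at h
  linarith

lemma exp_neg_numGreater_mul_le_self {δ : ℝ} (hδ : 0 ≤ δ) (i : ι) {y : ℝ} (hy : 0 ≤ y) :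
    exp (-(numGreater x i * δ)) * y ≤ y :=
  mul_le_of_le_one_left hy (exp_le_one_iff.mpr (neg_nonpos.mpr (by positivity)))

end Counting

section NoGap

variable [DecidableEq ι] {δ : ℝ} {x : ι → ℝ} {ℓ : ι}

lemma exists_lt_lt_exp_mul_of_not_liesAboveGap (h : ¬ LiesAboveGap δ x ℓ) {i : ι}
    (hi : x i < x ℓ) : ∃ j, x i < x j ∧ x j < exp δ * x i := by
  by_contra! hno
  refine h ⟨({j | x i < x j} : Finset ι), by simpa using hi, ⟨ℓ, by simpa using hi⟩, ⟨i, by simp⟩,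
    fun j hj k hk => ?_⟩
  simp only [mem_compl, mem_filter, mem_univ, true_and, not_lt] at hj hk
  exact (mul_le_mul_of_nonneg_left hk (exp_pos δ).le).trans (hno j hj)

lemma exp_neg_numGreater_mul_lt (hδ : 0 ≤ δ) (hx : ∀ i, 0 < x i) (h : ¬ LiesAboveGap δ x ℓ)
    (i : ι) (hi : x i < x ℓ) : exp (-(numGreater x i * δ)) * x ℓ < x i := by
  induction hn : numGreater x i using Nat.strong_induction_on generalizing i with
  | _ n ih =>
  obtain ⟨j, hij, hj⟩ := exists_lt_lt_exp_mul_of_not_liesAboveGap h hi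
  have hji : numGreater x j + 1 ≤ n := hn ▸ numGreater_lt_numGreater x hij
  have hxj : exp (-(numGreater x j * δ)) * x ℓ ≤ x j := by
    rcases lt_or_ge (x j) (x ℓ) with hjℓ | hℓj
    · exact (ih _ (by omega) j hjℓ rfl).le
    · exact (exp_neg_numGreater_mul_le_self x hδ j (hx ℓ).le).trans hℓj
  calc exp (-(n * δ)) * x ℓ
      ≤ exp (-δ) * (exp (-(numGreater x j * δ)) * x ℓ) := by
        rw [← mul_assoc, ← exp_add]
        gcongr
        · exact (hx ℓ).le
        · have : ((numGreater x j + 1 : ℕ) : ℝ) ≤ n := by exact_mod_cast hji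
          push_cast at this
          nlinarith
    _ ≤ exp (-δ) * x j := by gcongr
    _ < exp (-δ) * (exp δ * x i) := by gcongr
    _ = x i := by rw [← mul_assoc, ← exp_add, neg_add_cancel, exp_zero, one_mul]

lemma exp_neg_numGreater_mul_le (hδ : 0 ≤ δ) (hx : ∀ i, 0 < x i) (h : ¬ LiesAboveGap δ x ℓ)
    (i : ι) : exp (-(numGreater x i * δ)) * x ℓ ≤ x i := by
  rcases lt_or_ge (x i) (x ℓ) with hi | hi
  · exact (exp_neg_numGreater_mul_lt hδ hx h i hi).le
  · exact (exp_neg_numGreater_mul_le_self x hδ i (hx ℓ).le).trans hi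

theorem exp_neg_mul_lt_of_not_liesAboveGap (hcard : 2 ≤ Fintype.card ι) (hδ : 0 < δ)
    (hx : ∀ i, 0 < x i) (h : ¬ LiesAboveGap δ x ℓ) (i : ι) :
    exp (-((Fintype.card ι - 1) * δ)) * x ℓ < x i := by
  have hcard' : (2 : ℝ) ≤ Fintype.card ι := by exact_mod_cast hcard
  rcases lt_or_ge (x i) (x ℓ) with hi | hi
  · refine lt_of_le_of_lt ?_ (exp_neg_numGreater_mul_lt hδ.le hx h i hi)
    have hc : (numGreater x i : ℝ) ≤ Fintype.card ι - 1 := by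
      rw [le_sub_iff_add_le]
      exact_mod_cast (by have := numGreater_le x i; omega : numGreater x i + 1 ≤ Fintype.card ι)
    gcongr
    exact (hx ℓ).le
  · refine lt_of_lt_of_le ?_ hi
    exact mul_lt_of_lt_one_left (hx ℓ) (exp_lt_one_iff.mpr (by nlinarith))

theorem exp_neg_mul_pow_lt_prod_of_not_liesAboveGap (hcard : 2 ≤ Fintype.card ι) (hδ : 0 < δ)
    (hx : ∀ i, 0 < x i) (h : ¬ LiesAboveGap δ x ℓ) :
    exp (-(Fintype.card ι * (Fintype.card ι - 1) * δ / 2)) * x ℓ ^ Fintype.card ι < ∏ i, x i := by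
  have hcard' : (2 : ℝ) ≤ Fintype.card ι := by exact_mod_cast hcard
  have hexp : 0 < Fintype.card ι * (Fintype.card ι - 1) * δ / 2 := by
    have : (0 : ℝ) < Fintype.card ι - 1 := by linarith
    positivity
  by_cases hlow : ∃ i, x i < x ℓ
  · obtain ⟨i, hi⟩ := hlow
    calc exp (-(Fintype.card ι * (Fintype.card ι - 1) * δ / 2)) * x ℓ ^ Fintype.card ι
        ≤ exp (-((∑ i, numGreater x i : ℝ) * δ)) * x ℓ ^ Fintype.card ι := by
          have := sum_numGreater_le x
          gcongr
          · exact (pow_pos (hx ℓ) _).le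
          · nlinarith
      _ = ∏ i, exp (-(numGreater x i * δ)) * x ℓ := by
          rw [prod_mul_distrib, prod_const, card_univ, ← exp_sum, sum_neg_distrib, ← sum_mul]
      _ < ∏ i, x i :=
          prod_lt_prod (fun _ _ => mul_pos (exp_pos _) (hx ℓ))
            (fun j _ => exp_neg_numGreater_mul_le hδ.le hx h j)
            ⟨i, mem_univ i, exp_neg_numGreater_mul_lt hδ.le hx h i hi⟩
  · simp only [not_exists, not_lt] at hlow
    calc exp (-(Fintype.card ι * (Fintype.card ι - 1) * δ / 2)) * x ℓ ^ Fintype.card ι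
        < x ℓ ^ Fintype.card ι :=
          mul_lt_of_lt_one_left (pow_pos (hx ℓ) _) (exp_lt_one_iff.mpr (by linarith))
      _ = ∏ _i : ι, x ℓ := by rw [prod_const, card_univ]
      _ ≤ ∏ i, x i := prod_le_prod (fun _ _ => (hx ℓ).le) fun i _ => hlow i

end NoGap

/-- If `ℓ` does not lie above any `δ`-gap for `(r₁,…,r_N)`, then
`min rᵢ² > e^{−(N−1)δ}·r_ℓ²` and `∏ rᵢ² > e^{−N(N−1)δ/2}·r_ℓ^{2N}`. -/
theorem stmt_6 (N : ℕ) (hN : 2 ≤ N) (δ : ℝ) (hδ : 0 < δ)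
    (ℓ : Fin N) (r : Fin N → ℝ) (hr : ∀ i, 0 < r i)
    (h : ∀ J : Finset (Fin N), ℓ ∈ J → Jᶜ.Nonempty →
      ¬ ∀ j ∈ J, ∀ k ∈ Jᶜ, Real.exp δ * r k ^ 2 ≤ r j ^ 2) :
    (∀ i, Real.exp (-(((N : ℝ) - 1) * δ)) * r ℓ ^ 2 < r i ^ 2) ∧
    Real.exp (-((N : ℝ) * ((N : ℝ) - 1) * δ / 2)) * r ℓ ^ (2 * N) < ∏ i, r i ^ 2 := by
  have hx : ∀ i, 0 < r i ^ 2 := fun i => pow_pos (hr i) 2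
  have hgap : ¬ LiesAboveGap δ (fun i => r i ^ 2) ℓ := fun ⟨J, hℓ, _, hc, hJ⟩ => h J hℓ hc hJ
  have hcard : 2 ≤ Fintype.card (Fin N) := by rwa [Fintype.card_fin]
  refine ⟨fun i => ?_, ?_⟩
  · simpa using exp_neg_mul_lt_of_not_liesAboveGap hcard hδ hx hgap i
  · simpa [pow_mul] using exp_neg_mul_pow_lt_prod_of_not_liesAboveGap hcard hδ hx hgap
end

section
/- Let δ > 0, let M be a smoothed maximum function as in the context, let N ≥ 2, and let Φ, φ_i and μ_j be as in the context. Suppose ρ ∈ ℝ^N satisfies ρ₁ ≤ ρ₂ ≤ ⋯ ≤ ρ_N. Then: (1) 0 < μ₁(ρ) ≤ μ₂(ρ) ≤ ⋯ ≤ μ_N(ρ); and (2) for every 1 ≤ j ≤ N, 2 ≤ μ_j(ρ) / (e^{2jρ_j} · ∏_{i=j+1}^N e^{2ρ_i}) ≤ 4N e^{2Nδ}. -/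
/-!
Write `M (u, v) = v + m (u - v)` with `m t = M (t, 0)`. The profile `m` is convex, vanishes on
`(-∞, -δ]` and is the identity on `[δ, ∞)`, so `0 ≤ m' ≤ 1` and `max t 0 ≤ m t ≤ max t 0 + δ`.
Differentiating `Φ` gives `μ_j = 2 ∑_k T_jk` with
`T_jk = e^{φ_j} m'(2ρ_j - 2ρ_k) + e^{φ_k} (1 - m'(2ρ_k - 2ρ_j)) ≥ 0` and `T_jj = e^{φ_j}`.
As `φ_j` and `m'` are nondecreasing, every `T_jk` is nondecreasing in `ρ_j`, which orders the `μ_j`.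
For monotone `ρ` the denominator is `e^{L_j}` with `L_j = ∑_k max (2ρ_j) (2ρ_k)`, and
`L_j ≤ φ_j ≤ L_j + Nδ`. This bounds `T_jk` by `2 e^{L_j + 2Nδ}` whenever `2ρ_k ≤ 2ρ_j + δ`;
otherwise `m'(2ρ_k - 2ρ_j) = 1` and the second summand of `T_jk` vanishes.
-/

open Finset Real

structure IsMaxProfile (δ : ℝ) (m : ℝ → ℝ) : Prop where
  differentiable : Differentiable ℝ m
  convexOn : ConvexOn ℝ Set.univ m
  eq_zero_of_le : ∀ t ≤ -δ, m t = 0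
  eq_self_of_le : ∀ t, δ ≤ t → m t = t

namespace IsMaxProfile

variable {δ : ℝ} {m : ℝ → ℝ}

theorem monotone_deriv (hm : IsMaxProfile δ m) : Monotone (deriv m) :=
  monotoneOn_univ.mp <| hm.convexOn.monotoneOn_deriv fun x _ ↦ hm.differentiable x

theorem deriv_eq_zero_of_lt (hm : IsMaxProfile δ m) {t : ℝ} (ht : t < -δ) : deriv m t = 0 := by
  have : m =ᶠ[nhds t] fun _ ↦ 0 := by
    filter_upwards [Iio_mem_nhds ht] with s hs using hm.eq_zero_of_le s hs.le
  simp [this.deriv_eq]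

theorem deriv_eq_one_of_lt (hm : IsMaxProfile δ m) {t : ℝ} (ht : δ < t) : deriv m t = 1 := by
  have : m =ᶠ[nhds t] id := by
    filter_upwards [Ioi_mem_nhds ht] with s hs using hm.eq_self_of_le s hs.le
  simp [this.deriv_eq]

theorem deriv_nonneg (hm : IsMaxProfile δ m) (t : ℝ) : 0 ≤ deriv m t :=
  hm.deriv_eq_zero_of_lt ((min_le_right t (-δ - 1)).trans_lt (by linarith)) ▸
    hm.monotone_deriv (min_le_left _ _)

theorem deriv_le_one (hm : IsMaxProfile δ m) (t : ℝ) : deriv m t ≤ 1 :=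
  hm.deriv_eq_one_of_lt ((by linarith : δ < δ + 1).trans_le (le_max_right t _)) ▸
    hm.monotone_deriv (le_max_left _ _)

theorem monotone (hm : IsMaxProfile δ m) : Monotone m :=
  monotone_of_deriv_nonneg hm.differentiable hm.deriv_nonneg

theorem nonneg (hm : IsMaxProfile δ m) (t : ℝ) : 0 ≤ m t :=
  hm.eq_zero_of_le _ (min_le_right t (-δ)) ▸ hm.monotone (min_le_left _ _)

theorem delta_nonneg (hm : IsMaxProfile δ m) : 0 ≤ δ :=
  hm.eq_self_of_le δ le_rfl ▸ hm.nonneg δ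

theorem le_self (hm : IsMaxProfile δ m) (t : ℝ) : t ≤ m t := by
  have hmono : Monotone fun s ↦ s - m s := by
    refine monotone_of_deriv_nonneg (differentiable_id.sub hm.differentiable) fun s ↦ ?_
    rw [((hasDerivAt_id' s).fun_sub (hm.differentiable s).hasDerivAt).deriv]
    linarith [hm.deriv_le_one s]
  have := hmono (le_max_left t δ)
  simp only [hm.eq_self_of_le _ (le_max_right t δ), sub_self] at this
  linarith

theorem le_max_add (hm : IsMaxProfile δ m) (t : ℝ) : m t ≤ max t 0 + δ := by
  rcases le_total δ t with ht | ht
  · rw [hm.eq_self_of_le t ht]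
    linarith [le_max_left t 0, hm.delta_nonneg]
  · have := hm.monotone ht
    rw [hm.eq_self_of_le δ le_rfl] at this
    linarith [le_max_right t 0]

theorem max_le_add_sub (hm : IsMaxProfile δ m) (a b : ℝ) : max a b ≤ b + m (a - b) :=
  max_le (by linarith [hm.le_self (a - b)]) (by linarith [hm.nonneg (a - b)])

theorem add_sub_le_max_add (hm : IsMaxProfile δ m) (a b : ℝ) : b + m (a - b) ≤ max a b + δ := by
  have : max (a - b) 0 ≤ max a b - b :=
    max_le (by linarith [le_max_left a b]) (by linarith [le_max_right a b])
  linarith [hm.le_max_add (a - b)]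

end IsMaxProfile

section SmoothMax

variable {δ : ℝ} {M : ℝ × ℝ → ℝ}

theorem eq_add_apply_sub_zero (hM_shift : ∀ u v a : ℝ, M (u + a, v + a) = M (u, v) + a)
    (u v : ℝ) : M (u, v) = v + M (u - v, 0) := by
  simpa [add_comm] using hM_shift (u - v) 0 v

theorem isMaxProfile_apply_zero (hδ : 0 ≤ δ) (hM_diff : Differentiable ℝ M)
    (hM_convex : ConvexOn ℝ Set.univ M) (hM_max : ∀ u v : ℝ, δ ≤ |u - v| → M (u, v) = max u v) :
    IsMaxProfile δ fun t ↦ M (t, 0) where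
  differentiable := hM_diff.comp (differentiable_id.prodMk (differentiable_const 0))
  convexOn := hM_convex.comp_linearMap (LinearMap.inl ℝ ℝ ℝ)
  eq_zero_of_le t ht := by
    rw [hM_max t 0 (by rw [sub_zero, abs_of_nonpos (by linarith)]; linarith)]
    exact max_eq_right (by linarith)
  eq_self_of_le t ht := by
    rw [hM_max t 0 (by rw [sub_zero, abs_of_nonneg (by linarith)]; linarith)]
    exact max_eq_left (by linarith)

end SmoothMax

variable {ι : Type*} [Fintype ι] (m : ℝ → ℝ)

/-- The summand `k = i` is `2 * x i + m 0`, so this is `φ_i` (see `exponent_eq_sum_erase`). -/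
noncomputable def exponent (x : ι → ℝ) (i : ι) : ℝ :=
  ∑ k, (2 * x k + m (2 * x i - 2 * x k)) - m 0

noncomputable def potential (x : ι → ℝ) : ℝ :=
  ∑ i, exp (exponent m x i)

noncomputable def momentTerm (x : ι → ℝ) (j k : ι) : ℝ :=
  exp (exponent m x j) * deriv m (2 * x j - 2 * x k) +
    exp (exponent m x k) * (1 - deriv m (2 * x k - 2 * x j))

noncomputable def maxSum (x : ι → ℝ) (j : ι) : ℝ :=
  ∑ k, max (2 * x j) (2 * x k)

variable {m}

local notation "proj" => ContinuousLinearMap.proj (R := ℝ) (φ := fun _ : ι ↦ ℝ)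

theorem hasFDerivAt_exponent (hm : Differentiable ℝ m) (x : ι → ℝ) (i : ι) :
    HasFDerivAt (fun y ↦ exponent m y i)
      (∑ k, ((2 : ℝ) • proj k + deriv m (2 * x i - 2 * x k) •
        ((2 : ℝ) • proj i - (2 : ℝ) • proj k))) x := by
  have hproj (k : ι) : HasFDerivAt (fun y : ι → ℝ ↦ 2 * y k) ((2 : ℝ) • proj k) x :=
    (hasFDerivAt_apply k x).const_mul 2
  refine (HasFDerivAt.fun_sum fun k _ ↦ ?_).sub_const (m 0)
  exact (hproj k).add ((hm _).hasDerivAt.comp_hasFDerivAt x ((hproj i).sub (hproj k)))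

theorem fderiv_potential_apply_single [DecidableEq ι] (hm : Differentiable ℝ m) (x : ι → ℝ)
    (j : ι) : fderiv ℝ (potential m) x (Pi.single j 1) = 2 * ∑ k, momentTerm m x j k := by
  have hΦ : HasFDerivAt (potential m) _ x :=
    HasFDerivAt.fun_sum fun i _ ↦ (hasFDerivAt_exponent hm x i).exp
  rw [hΦ.fderiv]
  simp only [_root_.sum_apply, sum_add_distrib, smul_add, add_apply, smul_apply,
    ContinuousLinearMap.proj_apply, Pi.single_apply, smul_eq_mul, mul_ite, mul_one, mul_zero,
    sum_ite_eq', mem_univ, ↓reduceIte, sub_apply, mul_sub, sum_sub_distrib, sum_ite_irrel,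
    sum_const_zero, mul_sum, momentTerm]
  simp only [← mul_assoc, ← sum_mul]
  ring

variable {δ : ℝ}

theorem exponent_eq_sum_erase [DecidableEq ι] (x : ι → ℝ) (i : ι) :
    exponent m x i = ∑ k ∈ univ.erase i, (2 * x k + m (2 * x i - 2 * x k)) + 2 * x i := by
  rw [exponent, ← add_sum_erase _ _ (mem_univ i), sub_self]
  ring

theorem maxSum_le_exponent (hm : IsMaxProfile δ m) (x : ι → ℝ) (i : ι) :
    maxSum x i ≤ exponent m x i := by
  classical
  rw [exponent_eq_sum_erase, maxSum, ← add_sum_erase _ _ (mem_univ i), max_self,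
    add_comm (2 * x i)]
  gcongr with k
  exact hm.max_le_add_sub _ _

theorem exponent_le_maxSum_add (hm : IsMaxProfile δ m) (x : ι → ℝ) (i : ι) :
    exponent m x i ≤ maxSum x i + Fintype.card ι * δ := by
  calc exponent m x i ≤ ∑ k, (max (2 * x i) (2 * x k) + δ) := by
        rw [exponent]
        linarith [sum_le_sum fun k (_ : k ∈ univ) ↦ hm.add_sub_le_max_add (2 * x i) (2 * x k),
          hm.nonneg 0]
    _ = maxSum x i + Fintype.card ι * δ := by
        rw [sum_add_distrib, sum_const, card_univ, nsmul_eq_mul, maxSum]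

theorem maxSum_le_add_of_le {c : ℝ} (hc : 0 ≤ c) {x : ι → ℝ} {j k : ι}
    (h : 2 * x k ≤ 2 * x j + c) : maxSum x k ≤ maxSum x j + Fintype.card ι * c := by
  calc maxSum x k ≤ ∑ i, (max (2 * x j) (2 * x i) + c) := by
        refine sum_le_sum fun i _ ↦ ?_
        exact max_le (by linarith [le_max_left (2 * x j) (2 * x i)])
          (by linarith [le_max_right (2 * x j) (2 * x i)])
    _ = maxSum x j + Fintype.card ι * c := by
        rw [sum_add_distrib, sum_const, card_univ, nsmul_eq_mul, maxSum]

theorem exponent_le_exponent (hm : Monotone m) {x : ι → ℝ} {a b : ι} (h : x a ≤ x b) :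
    exponent m x a ≤ exponent m x b := by
  unfold exponent
  gcongr with k
  exact hm (by linarith)

theorem momentTerm_self (x : ι → ℝ) (j : ι) : momentTerm m x j j = exp (exponent m x j) := by
  rw [momentTerm]
  ring

theorem momentTerm_nonneg (hm : IsMaxProfile δ m) (x : ι → ℝ) (j k : ι) :
    0 ≤ momentTerm m x j k := by
  have := hm.deriv_le_one (2 * x k - 2 * x j)
  have := hm.deriv_nonneg (2 * x j - 2 * x k)
  unfold momentTerm
  positivity

theorem momentTerm_le_momentTerm (hm : IsMaxProfile δ m) {x : ι → ℝ} {a b : ι} (h : x a ≤ x b)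
    (k : ι) : momentTerm m x a k ≤ momentTerm m x b k := by
  unfold momentTerm
  have := hm.deriv_nonneg (2 * x a - 2 * x k)
  gcongr ?_ * ?_ + _ * (1 - ?_)
  · exact exp_le_exp.2 (exponent_le_exponent hm.monotone h)
  · exact hm.monotone_deriv (by linarith)
  · exact hm.monotone_deriv (by linarith)

theorem exp_exponent_le (hm : IsMaxProfile δ m) {x : ι → ℝ} {j k : ι}
    (h : 2 * x k ≤ 2 * x j + δ) :
    exp (exponent m x k) ≤ exp (maxSum x j + 2 * Fintype.card ι * δ) := by
  gcongr
  linarith [exponent_le_maxSum_add hm x k, maxSum_le_add_of_le hm.delta_nonneg h]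

theorem momentTerm_le (hm : IsMaxProfile δ m) (x : ι → ℝ) (j k : ι) :
    momentTerm m x j k ≤ 2 * exp (maxSum x j + 2 * Fintype.card ι * δ) := by
  have hj : exp (exponent m x j) * deriv m (2 * x j - 2 * x k) ≤
      exp (maxSum x j + 2 * Fintype.card ι * δ) :=
    (mul_le_of_le_one_right (exp_pos _).le (hm.deriv_le_one _)).trans
      (exp_exponent_le hm (by linarith [hm.delta_nonneg]))
  have hk : exp (exponent m x k) * (1 - deriv m (2 * x k - 2 * x j)) ≤
      exp (maxSum x j + 2 * Fintype.card ι * δ) := by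
    rcases le_or_gt (2 * x k) (2 * x j + δ) with hkj | hkj
    · refine (mul_le_of_le_one_right (exp_pos _).le ?_).trans (exp_exponent_le hm hkj)
      linarith [hm.deriv_nonneg (2 * x k - 2 * x j)]
    · rw [hm.deriv_eq_one_of_lt (by linarith), sub_self, mul_zero]
      positivity
  rw [momentTerm]
  linarith

theorem maxSum_eq_of_monotone {n : ℕ} {x : Fin n → ℝ} (hx : Monotone x) (j : Fin n) :
    maxSum x j = 2 * ((j : ℕ) + 1) * x j + ∑ k ∈ Ioi j, 2 * x k := by
  rw [maxSum, ← sum_filter_add_sum_filter_not univ (· ≤ j)]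
  simp only [not_le, filter_ge_eq_Iic, filter_lt_eq_Ioi]
  rw [sum_congr rfl fun k hk ↦ max_eq_left (by linarith [hx (mem_Iic.mp hk)]),
    sum_congr rfl fun k hk ↦ max_eq_right (by linarith [hx (mem_Ioi.mp hk).le]),
    sum_const, Fin.card_Iic, nsmul_eq_mul]
  push_cast
  ring

theorem stmt_7_general (δ : ℝ) (hδ : 0 < δ) (M : ℝ × ℝ → ℝ)
    (hM_smooth : ContDiff ℝ (⊤ : ℕ∞) M)
    (hM_convex : ConvexOn ℝ Set.univ M)
    (hM_max : ∀ u v : ℝ, δ ≤ |u - v| → M (u, v) = max u v)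
    (hM_shift : ∀ u v a : ℝ, M (u + a, v + a) = M (u, v) + a)
    (N : ℕ)
    (Φ : (Fin N → ℝ) → ℝ)
    (hΦ : ∀ ρ : Fin N → ℝ,
      Φ ρ = ∑ i, Real.exp ((∑ j ∈ Finset.univ.erase i, M (2 * ρ i, 2 * ρ j)) + 2 * ρ i))
    (μ : (Fin N → ℝ) → Fin N → ℝ)
    (hμ : ∀ (ρ : Fin N → ℝ) (j : Fin N), μ ρ j = fderiv ℝ Φ ρ (Pi.single j 1))
    (ρ : Fin N → ℝ) (hρ : Monotone ρ) :
    ((∀ j, 0 < μ ρ j) ∧ (∀ i j : Fin N, i ≤ j → μ ρ i ≤ μ ρ j)) ∧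
    (∀ j : Fin N,
      2 ≤ μ ρ j /
          (Real.exp (2 * (((j : ℕ) : ℝ) + 1) * ρ j) * ∏ i ∈ Finset.Ioi j, Real.exp (2 * ρ i)) ∧
      μ ρ j /
          (Real.exp (2 * (((j : ℕ) : ℝ) + 1) * ρ j) * ∏ i ∈ Finset.Ioi j, Real.exp (2 * ρ i)) ≤
        4 * (N : ℝ) * Real.exp (2 * (N : ℝ) * δ)) := by
  set m : ℝ → ℝ := fun t ↦ M (t, 0)
  have hm : IsMaxProfile δ m :=
    isMaxProfile_apply_zero hδ.le (hM_smooth.differentiable (by simp)) hM_convex hM_max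
  have hΦm : Φ = potential m := by
    funext x
    simp only [hΦ, potential, exponent_eq_sum_erase, eq_add_apply_sub_zero hM_shift (2 * x _)]
    rfl
  have hμm (j : Fin N) : μ ρ j = 2 * ∑ k, momentTerm m ρ j k := by
    rw [hμ, hΦm, fderiv_potential_apply_single hm.differentiable]
  have hden (j : Fin N) : exp (2 * ((j : ℕ) + 1) * ρ j) * ∏ i ∈ Ioi j, exp (2 * ρ i) =
      exp (maxSum ρ j) := by
    rw [← exp_sum, ← exp_add, maxSum_eq_of_monotone hρ]
  have hlow (j : Fin N) : 2 * exp (maxSum ρ j) ≤ μ ρ j :=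
    calc 2 * exp (maxSum ρ j) ≤ 2 * momentTerm m ρ j j := by
          rw [momentTerm_self]; gcongr; exact maxSum_le_exponent hm ρ j
      _ ≤ μ ρ j := by
          rw [hμm]; gcongr; exact single_le_sum (fun k _ ↦ momentTerm_nonneg hm ρ j k) (mem_univ j)
  have hup (j : Fin N) : μ ρ j ≤ 4 * N * exp (2 * N * δ) * exp (maxSum ρ j) :=
    calc μ ρ j ≤ 2 * ∑ _k : Fin N, 2 * exp (maxSum ρ j + 2 * N * δ) := by
          rw [hμm]; gcongr with k; simpa using momentTerm_le hm ρ j k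
      _ = 4 * N * exp (2 * N * δ) * exp (maxSum ρ j) := by
          rw [sum_const, card_univ, Fintype.card_fin, nsmul_eq_mul, exp_add]; ring
  refine ⟨⟨fun j ↦ (by positivity : (0 : ℝ) < 2 * exp _).trans_le (hlow j), fun i j hij ↦ ?_⟩,
    fun j ↦ ?_⟩
  · rw [hμm, hμm]
    gcongr with k
    exact momentTerm_le_momentTerm hm (hρ hij) k
  · rw [hden, le_div_iff₀ (exp_pos _), div_le_iff₀ (exp_pos _)]
    exact ⟨hlow j, hup j⟩

/-- For the potential `Φ(ρ) = Σᵢ exp(Σ_{j≠i} M(2ρᵢ,2ρⱼ) + 2ρᵢ)`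
and its partial derivatives (moment map coordinates) `μⱼ(ρ) = ∂Φ/∂ρⱼ(ρ)`,
if `ρ₁ ≤ … ≤ ρ_N`, then `0 < μ₁ ≤ … ≤ μ_N` and for each `j`, the ratio
`μⱼ / (e^{2jρⱼ}·∏_{i>j} e^{2ρᵢ})` lies in `[2, 4N e^{2Nδ}]`
(indices `j : Fin N` are zero-based, so `j` corresponds to `j+1` above). -/
theorem stmt_7 (δ : ℝ) (hδ : 0 < δ) (M : ℝ × ℝ → ℝ)
    (hM_smooth : ContDiff ℝ (⊤ : ℕ∞) M)
    (hM_convex : ConvexOn ℝ Set.univ M)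
    (hM_max : ∀ u v : ℝ, δ ≤ |u - v| → M (u, v) = max u v)
    (hM_shift : ∀ u v a : ℝ, M (u + a, v + a) = M (u, v) + a)
    (hM_symm : ∀ u v : ℝ, M (u, v) = M (v, u))
    (N : ℕ) (hN : 2 ≤ N)
    (Φ : (Fin N → ℝ) → ℝ)
    (hΦ : ∀ ρ : Fin N → ℝ,
      Φ ρ = ∑ i, Real.exp ((∑ j ∈ Finset.univ.erase i, M (2 * ρ i, 2 * ρ j)) + 2 * ρ i))
    (μ : (Fin N → ℝ) → Fin N → ℝ)
    (hμ : ∀ (ρ : Fin N → ℝ) (j : Fin N), μ ρ j = fderiv ℝ Φ ρ (Pi.single j 1))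
    (ρ : Fin N → ℝ) (hρ : Monotone ρ) :
    ((∀ j, 0 < μ ρ j) ∧ (∀ i j : Fin N, i ≤ j → μ ρ i ≤ μ ρ j)) ∧
    (∀ j : Fin N,
      2 ≤ μ ρ j /
          (Real.exp (2 * (((j : ℕ) : ℝ) + 1) * ρ j) * ∏ i ∈ Finset.Ioi j, Real.exp (2 * ρ i)) ∧
      μ ρ j /
          (Real.exp (2 * (((j : ℕ) : ℝ) + 1) * ρ j) * ∏ i ∈ Finset.Ioi j, Real.exp (2 * ρ i)) ≤
        4 * (N : ℝ) * Real.exp (2 * (N : ℝ) * δ)) :=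
  stmt_7_general δ hδ M hM_smooth hM_convex hM_max hM_shift N Φ hΦ μ hμ ρ hρ
end

section
/- Let δ > 0, let M be a smoothed maximum function as in the context, let N ≥ 2, and let Φ, φ_i and μ_j be as in the context. Suppose ρ ∈ ℝ^N satisfies ρ₁ ≤ ρ₂ ≤ ⋯ ≤ ρ_N. Then for all indices 1 ≤ k < j ≤ N, (2N)^{−1/(2N)} · e^{−δ} · (μ_j(ρ)/μ_k(ρ))^{1/(2N)} ≤ e^{ρ_j − ρ_k} ≤ (2N)^{1/2} · e^{Nδ} · (μ_j(ρ)/μ_k(ρ))^{1/2}. -/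
/-!
Convexity together with `M = max` away from the diagonal makes `M` nondecreasing in each
argument, and translation invariance then makes it `1`-Lipschitz in each argument. Hence
raising `ρ_j` by `t ≥ 0` raises `φ_j` by between `2t` and `2Nt`, raises every other `φ_i` by
at most `2t`, and does not change `φ_i` at all when `ρ_i > ρ_j + t + δ/2`; when
`ρ_i ≤ ρ_j + δ/2` instead, `φ_i ≤ φ_j + Nδ`. Differentiating,
`2 e^{φ_j} ≤ μ_j ≤ 4N e^{Nδ} e^{φ_j}`. Since moreover `φ_j - φ_k` lies between `2(ρ_j - ρ_k)`
and `2N(ρ_j - ρ_k)`, taking logarithms gives both bounds.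
-/

open Real Finset Filter Topology

structure IsSmoothedMax (δ : ℝ) (M : ℝ × ℝ → ℝ) : Prop where
  convexOn : ConvexOn ℝ Set.univ M
  eq_max : ∀ u v, δ ≤ |u - v| → M (u, v) = max u v
  map_add : ∀ u v a, M (u + a, v + a) = M (u, v) + a
  symm : ∀ u v, M (u, v) = M (v, u)

theorem ConvexOn.monotoneOn_Ici_of_le {f : ℝ → ℝ} (hf : ConvexOn ℝ Set.univ f) {x y : ℝ}
    (hxy : x < y) (h : f x ≤ f y) : MonotoneOn f (Set.Ici y) := by
  intro a (hya : y ≤ a) b _ hab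
  rcases hya.eq_or_lt with rfl | hya
  · exact hf.le_right_of_left_le'' trivial trivial hxy hab h
  · exact hf.le_right_of_left_le'' trivial trivial hya hab
      (hf.le_right_of_left_le'' trivial trivial hxy hya.le h)

theorem HasDerivAt.le_of_eventually_le_add_mul {f : ℝ → ℝ} {f' x b : ℝ} (hf : HasDerivAt f f' x)
    (h : ∀ᶠ t in 𝓝[>] x, f t ≤ f x + b * (t - x)) : f' ≤ b := by
  refine le_of_tendsto ((hasDerivAt_iff_tendsto_slope.mp hf).mono_left (nhdsGT_le_nhdsNE x)) ?_
  filter_upwards [h, self_mem_nhdsWithin] with t ht (hxt : x < t)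
  rw [slope_def_field, div_le_iff₀ (sub_pos.2 hxt)]
  linarith

theorem HasDerivAt.le_of_eventually_add_mul_le {f : ℝ → ℝ} {f' x a : ℝ} (hf : HasDerivAt f f' x)
    (h : ∀ᶠ t in 𝓝[>] x, f x + a * (t - x) ≤ f t) : a ≤ f' := by
  refine ge_of_tendsto ((hasDerivAt_iff_tendsto_slope.mp hf).mono_left (nhdsGT_le_nhdsNE x)) ?_
  filter_upwards [h, self_mem_nhdsWithin] with t ht (hxt : x < t)
  rw [slope_def_field, le_div_iff₀ (sub_pos.2 hxt)]
  linarith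

namespace IsSmoothedMax

variable {δ : ℝ} {M : ℝ × ℝ → ℝ}

theorem eq_snd_of_le_sub (hM : IsSmoothedMax δ M) {u v : ℝ} (h : u ≤ v - |δ|) :
    M (u, v) = v := by
  have hvu : |δ| ≤ v - u := by linarith
  rw [hM.eq_max u v (abs_sub_comm v u ▸ (le_abs_self δ).trans (hvu.trans (le_abs_self _))),
    max_eq_right (by linarith [abs_nonneg δ])]

theorem monotone_fst (hM : IsSmoothedMax δ M) (v : ℝ) : Monotone fun u => M (u, v) := by
  have hconv : ConvexOn ℝ Set.univ fun u => M (u, v) := by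
    simpa [Function.comp_def] using
      (hM.convexOn.translate_right (0, v)).comp_linearMap (LinearMap.inl ℝ ℝ ℝ)
  intro u₁ u₂ hu
  set y := min u₁ (v - |δ|)
  have hflat : M (y - 1, v) ≤ M (y, v) := by
    rw [hM.eq_snd_of_le_sub (by linarith [min_le_right u₁ (v - |δ|)]),
      hM.eq_snd_of_le_sub (min_le_right _ _)]
  exact hconv.monotoneOn_Ici_of_le (sub_one_lt y) hflat (Set.mem_Ici.2 (min_le_left _ _))
    (Set.mem_Ici.2 ((min_le_left _ _).trans hu)) hu

theorem monotone_snd (hM : IsSmoothedMax δ M) (u : ℝ) : Monotone fun v => M (u, v) := by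
  simpa only [hM.symm u] using hM.monotone_fst u

theorem le_add_fst (hM : IsSmoothedMax δ M) {u u' : ℝ} (v : ℝ) (h : u ≤ u') :
    M (u', v) ≤ M (u, v) + (u' - u) := by
  calc M (u', v) ≤ M (u + (u' - u), v + (u' - u)) := by
        rw [add_sub_cancel]; exact hM.monotone_snd u' (by linarith)
    _ = M (u, v) + (u' - u) := hM.map_add u v _

theorem le_add_snd (hM : IsSmoothedMax δ M) (u : ℝ) {v v' : ℝ} (h : v ≤ v') :
    M (u, v') ≤ M (u, v) + (v' - v) := by
  simpa only [hM.symm u] using hM.le_add_fst u h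

end IsSmoothedMax

section Phi

variable {ι : Type*} [Fintype ι] [DecidableEq ι]

def phi (M : ℝ × ℝ → ℝ) (i : ι) (ρ : ι → ℝ) : ℝ :=
  (∑ l ∈ univ.erase i, M (2 * ρ i, 2 * ρ l)) + 2 * ρ i

noncomputable def Phi (M : ℝ × ℝ → ℝ) (ρ : ι → ℝ) : ℝ :=
  ∑ i, exp (phi M i ρ)

variable {δ : ℝ} {M : ℝ × ℝ → ℝ}

theorem phi_eq_sum_erase_add {i l : ι} (hil : i ≠ l) (ρ : ι → ℝ) :
    phi M i ρ = (∑ m ∈ (univ.erase i).erase l, M (2 * ρ i, 2 * ρ m)) + M (2 * ρ i, 2 * ρ l)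
      + 2 * ρ i := by
  rw [phi, sum_erase_add _ _ (mem_erase.2 ⟨hil.symm, mem_univ l⟩)]

theorem phi_update_of_ne {i j : ι} (hij : i ≠ j) (ρ : ι → ℝ) (x : ℝ) :
    phi M i (Function.update ρ j x) = phi M i ρ + (M (2 * ρ i, 2 * x) - M (2 * ρ i, 2 * ρ j)) := by
  have hS : ∀ l ∈ (univ.erase i).erase j, Function.update ρ j x l = ρ l :=
    fun l hl => Function.update_of_ne (mem_erase.1 hl).1 _ _
  rw [phi_eq_sum_erase_add hij, phi_eq_sum_erase_add hij, sum_congr rfl fun l hl => by rw [hS l hl],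
    Function.update_self, Function.update_of_ne hij]
  ring

theorem phi_update_self (j : ι) (ρ : ι → ℝ) (x : ℝ) :
    phi M j (Function.update ρ j x) = (∑ l ∈ univ.erase j, M (2 * x, 2 * ρ l)) + 2 * x := by
  rw [phi, Function.update_self,
    sum_congr rfl fun l hl => by rw [Function.update_of_ne (mem_erase.1 hl).1]]

theorem differentiable_phi (hd : Differentiable ℝ M) (i : ι) : Differentiable ℝ (phi M i) := by
  unfold phi
  fun_prop

theorem fderiv_Phi_apply (hd : Differentiable ℝ M) (ρ v : ι → ℝ) :
    fderiv ℝ (Phi M) ρ v = ∑ i, exp (phi M i ρ) * fderiv ℝ (phi M i) ρ v := by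
  have := HasFDerivAt.fun_sum fun i (_ : i ∈ univ) =>
    ((differentiable_phi hd i ρ).hasFDerivAt).exp
  rw [show Phi M = fun ρ => ∑ i, exp (phi M i ρ) from rfl, this.fderiv]
  simp

theorem hasDerivAt_phi_update (hd : Differentiable ℝ M) (i j : ι) (ρ : ι → ℝ) :
    HasDerivAt (fun t => phi M i (Function.update ρ j (ρ j + t)))
      (fderiv ℝ (phi M i) ρ (Pi.single j 1)) 0 := by
  have hline : ∀ t : ℝ, ρ + t • Pi.single j 1 = Function.update ρ j (ρ j + t) := fun t => by
    ext l
    rcases eq_or_ne l j with rfl | hl <;> simp [*]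
  simpa only [HasLineDerivAt, hline] using
    (differentiable_phi hd i ρ).hasFDerivAt.hasLineDerivAt (Pi.single j 1)

namespace IsSmoothedMax

theorem phi_sub_phi_mem_Icc (hM : IsSmoothedMax δ M) {i k : ι} (hki : k ≠ i) {ρ : ι → ℝ}
    (h : ρ k ≤ ρ i) :
    phi M i ρ - phi M k ρ ∈ Set.Icc (2 * (ρ i - ρ k)) (2 * Fintype.card ι * (ρ i - ρ k)) := by
  set S := (univ.erase i).erase k
  have hdiff : phi M i ρ - phi M k ρ
      = (∑ l ∈ S, (M (2 * ρ i, 2 * ρ l) - M (2 * ρ k, 2 * ρ l))) + 2 * (ρ i - ρ k) := by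
    rw [phi_eq_sum_erase_add hki.symm, phi_eq_sum_erase_add hki, erase_right_comm (a := k),
      hM.symm (2 * ρ k), sum_sub_distrib]
    ring
  have hmono : ∀ l, M (2 * ρ k, 2 * ρ l) ≤ M (2 * ρ i, 2 * ρ l) :=
    fun l => hM.monotone_fst _ (by linarith)
  have hlip : ∀ l, M (2 * ρ i, 2 * ρ l) - M (2 * ρ k, 2 * ρ l) ≤ 2 * (ρ i - ρ k) :=
    fun l => by linarith [hM.le_add_fst (2 * ρ l) (by linarith : 2 * ρ k ≤ 2 * ρ i)]
  have hcard : (S.card : ℝ) + 1 + 1 = Fintype.card ι := by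
    simp only [S]
    exact_mod_cast (by rw [card_erase_add_one (mem_erase.2 ⟨hki, mem_univ k⟩),
      card_erase_add_one (mem_univ i), card_univ])
  rw [hdiff]
  refine ⟨?_, ?_⟩
  · linarith [sum_nonneg fun l (_ : l ∈ S) => sub_nonneg.2 (hmono l)]
  · have := sum_le_card_nsmul S _ _ fun l _ => hlip l
    rw [nsmul_eq_mul] at this
    nlinarith

theorem phi_update_of_ne_mem_Icc (hM : IsSmoothedMax δ M) {i j : ι} (hij : i ≠ j) (ρ : ι → ℝ)
    {t : ℝ} (ht : 0 ≤ t) :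
    phi M i (Function.update ρ j (ρ j + t)) ∈ Set.Icc (phi M i ρ) (phi M i ρ + 2 * t) := by
  rw [phi_update_of_ne hij]
  have hle : 2 * ρ j ≤ 2 * (ρ j + t) := by linarith
  refine ⟨?_, ?_⟩
  · linarith [hM.monotone_snd (2 * ρ i) hle]
  · linarith [hM.le_add_snd (2 * ρ i) hle]

theorem phi_update_of_far (hM : IsSmoothedMax δ M) (hδ : 0 ≤ δ) {i j : ι} (hij : i ≠ j)
    {ρ : ι → ℝ} {t : ℝ} (ht : 0 ≤ t) (hfar : ρ j + t + δ / 2 ≤ ρ i) :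
    phi M i (Function.update ρ j (ρ j + t)) = phi M i ρ := by
  have hmax : ∀ v ≤ ρ j + t, M (2 * ρ i, 2 * v) = 2 * ρ i := fun v hv => by
    rw [hM.eq_max _ _ ((by linarith : δ ≤ 2 * ρ i - 2 * v).trans (le_abs_self _)),
      max_eq_left (by linarith)]
  rw [phi_update_of_ne hij, hmax _ le_rfl, hmax _ (by linarith), sub_self, add_zero]

theorem phi_update_self_mem_Icc (hM : IsSmoothedMax δ M) (j : ι) (ρ : ι → ℝ) {t : ℝ}
    (ht : 0 ≤ t) :
    phi M j (Function.update ρ j (ρ j + t))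
      ∈ Set.Icc (phi M j ρ + 2 * t) (phi M j ρ + 2 * Fintype.card ι * t) := by
  have hle : 2 * ρ j ≤ 2 * (ρ j + t) := by linarith
  have hsum := sum_le_card_nsmul (univ.erase j)
    (fun l => M (2 * (ρ j + t), 2 * ρ l) - M (2 * ρ j, 2 * ρ l)) (2 * t)
    fun l _ => by linarith [hM.le_add_fst (2 * ρ l) hle]
  have hcard : ((univ.erase j).card : ℝ) + 1 = Fintype.card ι := by
    exact_mod_cast card_erase_add_one (mem_univ j)
  rw [phi_update_self, phi]
  refine ⟨?_, ?_⟩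
  · linarith [sum_le_sum fun l (_ : l ∈ univ.erase j) => hM.monotone_fst (2 * ρ l) hle]
  · rw [nsmul_eq_mul, sum_sub_distrib] at hsum
    nlinarith

theorem fderiv_phi_self_mem_Icc (hM : IsSmoothedMax δ M) (hd : Differentiable ℝ M) (j : ι)
    (ρ : ι → ℝ) :
    fderiv ℝ (phi M j) ρ (Pi.single j 1) ∈ Set.Icc 2 (2 * (Fintype.card ι : ℝ)) := by
  have hderiv := hasDerivAt_phi_update hd j j ρ
  refine ⟨?_, ?_⟩
  · refine hderiv.le_of_eventually_add_mul_le ?_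
    filter_upwards [self_mem_nhdsWithin] with t (ht : 0 < t)
    simpa using (hM.phi_update_self_mem_Icc j ρ ht.le).1
  · refine hderiv.le_of_eventually_le_add_mul ?_
    filter_upwards [self_mem_nhdsWithin] with t (ht : 0 < t)
    simpa [mul_assoc] using (hM.phi_update_self_mem_Icc j ρ ht.le).2

theorem fderiv_phi_of_ne_mem_Icc (hM : IsSmoothedMax δ M) (hd : Differentiable ℝ M) {i j : ι}
    (hij : i ≠ j) (ρ : ι → ℝ) :
    fderiv ℝ (phi M i) ρ (Pi.single j 1) ∈ Set.Icc 0 2 := by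
  have hderiv := hasDerivAt_phi_update hd i j ρ
  refine ⟨?_, ?_⟩
  · refine hderiv.le_of_eventually_add_mul_le ?_
    filter_upwards [self_mem_nhdsWithin] with t (ht : 0 < t)
    simpa using (hM.phi_update_of_ne_mem_Icc hij ρ ht.le).1
  · refine hderiv.le_of_eventually_le_add_mul ?_
    filter_upwards [self_mem_nhdsWithin] with t (ht : 0 < t)
    simpa using (hM.phi_update_of_ne_mem_Icc hij ρ ht.le).2

theorem fderiv_phi_nonpos_of_far (hM : IsSmoothedMax δ M) (hd : Differentiable ℝ M)
    (hδ : 0 ≤ δ) {i j : ι} (hij : i ≠ j) {ρ : ι → ℝ} (hfar : ρ j + δ / 2 < ρ i) :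
    fderiv ℝ (phi M i) ρ (Pi.single j 1) ≤ 0 := by
  refine (hasDerivAt_phi_update hd i j ρ).le_of_eventually_le_add_mul ?_
  filter_upwards [Ioo_mem_nhdsGT (show (0 : ℝ) < ρ i - ρ j - δ / 2 by linarith)]
    with t ⟨ht₀, ht₁⟩
  simp [hM.phi_update_of_far hδ hij (ρ := ρ) ht₀.le (by linarith)]

theorem phi_le_phi_add_of_le_add (hM : IsSmoothedMax δ M) (hδ : 0 ≤ δ) {i j : ι} (hij : i ≠ j)
    {ρ : ι → ℝ} (h : ρ i ≤ ρ j + δ / 2) :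
    phi M i ρ ≤ phi M j ρ + Fintype.card ι * δ := by
  have hcard : (0 : ℝ) ≤ Fintype.card ι := Nat.cast_nonneg _
  rcases le_total (ρ i) (ρ j) with hle | hle
  · linarith [(hM.phi_sub_phi_mem_Icc hij hle).1, mul_nonneg hcard hδ]
  · nlinarith [(hM.phi_sub_phi_mem_Icc hij.symm hle).2]

/-- Either `ρ i` lies so far above `ρ j` that `φ i` does not feel `ρ j` at all, or
`φ i ≤ φ j + Nδ`. -/
theorem exp_mul_fderiv_phi_of_ne_mem_Icc (hM : IsSmoothedMax δ M) (hd : Differentiable ℝ M)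
    (hδ : 0 ≤ δ) {i j : ι} (hij : i ≠ j) (ρ : ι → ℝ) :
    exp (phi M i ρ) * fderiv ℝ (phi M i) ρ (Pi.single j 1)
      ∈ Set.Icc 0 (2 * exp (Fintype.card ι * δ) * exp (phi M j ρ)) := by
  obtain ⟨h₀, h₂⟩ := hM.fderiv_phi_of_ne_mem_Icc hd hij ρ
  refine ⟨mul_nonneg (exp_pos _).le h₀, ?_⟩
  by_cases hfar : ρ j + δ / 2 < ρ i
  · exact (mul_nonpos_of_nonneg_of_nonpos (exp_pos _).le
      (hM.fderiv_phi_nonpos_of_far hd hδ hij hfar)).trans (by positivity)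
  · have hnear : exp (phi M i ρ) ≤ exp (Fintype.card ι * δ) * exp (phi M j ρ) := by
      rw [← exp_add, add_comm]
      exact exp_le_exp.2 (hM.phi_le_phi_add_of_le_add hδ hij (not_lt.1 hfar))
    nlinarith [exp_pos (phi M i ρ)]

theorem fderiv_Phi_mem_Icc (hM : IsSmoothedMax δ M) (hd : Differentiable ℝ M) (hδ : 0 ≤ δ)
    (ρ : ι → ℝ) (j : ι) :
    fderiv ℝ (Phi M) ρ (Pi.single j 1) ∈ Set.Icc (2 * exp (phi M j ρ))
      (4 * Fintype.card ι * exp (Fintype.card ι * δ) * exp (phi M j ρ)) := by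
  rw [fderiv_Phi_apply hd, ← add_sum_erase _ _ (mem_univ j)]
  set E := exp (phi M j ρ)
  set C := exp (Fintype.card ι * δ)
  have hE : 0 < E := exp_pos _
  have hC : 1 ≤ C := one_le_exp (by positivity)
  obtain ⟨hjj, hjj'⟩ := hM.fderiv_phi_self_mem_Icc hd j ρ
  have hoff := fun i (hi : i ∈ univ.erase j) =>
    hM.exp_mul_fderiv_phi_of_ne_mem_Icc hd hδ (mem_erase.1 hi).1 ρ
  have hsum := sum_le_card_nsmul _ _ _ fun i hi => (hoff i hi).2
  have hcard : ((univ.erase j).card : ℝ) = Fintype.card ι - 1 := by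
    rw [eq_sub_iff_add_eq]
    exact_mod_cast card_erase_add_one (mem_univ j)
  rw [nsmul_eq_mul, hcard] at hsum
  refine ⟨?_, ?_⟩
  · nlinarith [sum_nonneg fun i hi => (hoff i hi).1]
  · nlinarith [mul_le_mul_of_nonneg_left hjj' hE.le, mul_le_mul_of_nonneg_left hC
      (by positivity : (0 : ℝ) ≤ 2 * Fintype.card ι * E), mul_pos (zero_lt_one.trans_le hC) hE]

end IsSmoothedMax

end Phi

theorem abs_log_div_sub_le {n δ x y A B : ℝ} (hn : 0 < n)
    (hA : A ∈ Set.Icc (2 * exp x) (4 * n * exp (n * δ) * exp x))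
    (hB : B ∈ Set.Icc (2 * exp y) (4 * n * exp (n * δ) * exp y)) :
    |log (A / B) - (x - y)| ≤ log (2 * n) + n * δ := by
  have hlog : ∀ {z C : ℝ}, C ∈ Set.Icc (2 * exp z) (4 * n * exp (n * δ) * exp z) →
      log 2 + z ≤ log C ∧ log C ≤ log 2 + log (2 * n) + n * δ + z := fun {z C} ⟨h, h'⟩ => by
    have h2n : log (4 * n) = log 2 + log (2 * n) := by
      rw [← log_mul two_ne_zero (by linarith)]; ring_nf
    constructor
    · simpa [log_mul, log_exp] using log_le_log (by positivity) h
    · simpa [log_mul, log_exp, h2n, hn.ne'] using log_le_log (by linarith [exp_pos z]) h'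
  obtain ⟨hA₁, hA₂⟩ := hlog hA
  obtain ⟨hB₁, hB₂⟩ := hlog hB
  rw [log_div (by linarith [exp_pos x, hA.1]) (by linarith [exp_pos y, hB.1]), abs_sub_le_iff]
  constructor <;> linarith

theorem exp_mem_Icc_of_abs_log_sub_le {n δ d s R : ℝ} (hn : 0 < n) (hδ : 0 ≤ δ) (hR : 0 < R)
    (hlog : |log R - s| ≤ log (2 * n) + n * δ) (hs : s ∈ Set.Icc (2 * d) (2 * n * d)) :
    exp d ∈ Set.Icc ((2 * n) ^ (-(1 / (2 * n))) * exp (-δ) * R ^ (1 / (2 * n)))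
      ((2 * n) ^ ((1 : ℝ) / 2) * exp (n * δ) * R ^ ((1 : ℝ) / 2)) := by
  obtain ⟨hlog₁, hlog₂⟩ := abs_sub_le_iff.1 hlog
  obtain ⟨hs, hs'⟩ := hs
  refine ⟨?_, ?_⟩
  · rw [← log_le_log_iff (by positivity) (by positivity), log_mul (by positivity) (by positivity),
      log_mul (by positivity) (by positivity), log_rpow (by positivity), log_rpow hR, log_exp,
      log_exp]
    field_simp
    nlinarith
  · rw [← log_le_log_iff (by positivity) (by positivity), log_mul (by positivity) (by positivity),
      log_mul (by positivity) (by positivity), log_rpow (by positivity), log_rpow hR, log_exp,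
      log_exp]
    nlinarith [mul_nonneg hn.le hδ]

theorem stmt_8_general (δ : ℝ) (hδ : 0 < δ) (M : ℝ × ℝ → ℝ)
    (hM_smooth : ContDiff ℝ (⊤ : ℕ∞) M)
    (hM_convex : ConvexOn ℝ Set.univ M)
    (hM_max : ∀ u v : ℝ, δ ≤ |u - v| → M (u, v) = max u v)
    (hM_shift : ∀ u v a : ℝ, M (u + a, v + a) = M (u, v) + a)
    (hM_symm : ∀ u v : ℝ, M (u, v) = M (v, u))
    (N : ℕ)
    (Φ : (Fin N → ℝ) → ℝ)
    (hΦ : ∀ ρ : Fin N → ℝ,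
      Φ ρ = ∑ i, Real.exp ((∑ j ∈ Finset.univ.erase i, M (2 * ρ i, 2 * ρ j)) + 2 * ρ i))
    (μ : (Fin N → ℝ) → Fin N → ℝ)
    (hμ : ∀ (ρ : Fin N → ℝ) (j : Fin N), μ ρ j = fderiv ℝ Φ ρ (Pi.single j 1))
    (ρ : Fin N → ℝ) (hρ : Monotone ρ) :
    ∀ k j : Fin N, k < j →
      (2 * (N : ℝ)) ^ (-(1 / (2 * (N : ℝ)))) * Real.exp (-δ) *
          (μ ρ j / μ ρ k) ^ (1 / (2 * (N : ℝ))) ≤ Real.exp (ρ j - ρ k) ∧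
      Real.exp (ρ j - ρ k) ≤
        (2 * (N : ℝ)) ^ ((1 : ℝ) / 2) * Real.exp ((N : ℝ) * δ) *
          (μ ρ j / μ ρ k) ^ ((1 : ℝ) / 2) := by
  intro k j hkj
  have hM : IsSmoothedMax δ M := ⟨hM_convex, hM_max, hM_shift, hM_symm⟩
  have hd : Differentiable ℝ M := hM_smooth.differentiable (by simp)
  obtain rfl : Φ = Phi M := funext hΦ
  have hN : (0 : ℝ) < N := by exact_mod_cast k.pos
  have hj := hM.fderiv_Phi_mem_Icc hd hδ.le ρ j
  have hk := hM.fderiv_Phi_mem_Icc hd hδ.le ρ k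
  have hφ := hM.phi_sub_phi_mem_Icc hkj.ne (hρ hkj.le)
  simp only [Fintype.card_fin, ← hμ] at hj hk hφ
  exact exp_mem_Icc_of_abs_log_sub_le hN hδ.le
    (div_pos ((mul_pos two_pos (exp_pos _)).trans_le hj.1)
      ((mul_pos two_pos (exp_pos _)).trans_le hk.1))
    (abs_log_div_sub_le hN hj hk) hφ

/-- With `Φ` and `μⱼ = ∂Φ/∂ρⱼ` as in Statement 7 and
`ρ₁ ≤ … ≤ ρ_N`, for all `k < j`:
`(2N)^{−1/(2N)}·e^{−δ}·(μⱼ/μ_k)^{1/(2N)} ≤ e^{ρⱼ−ρ_k} ≤ (2N)^{1/2}·e^{Nδ}·(μⱼ/μ_k)^{1/2}`. -/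
theorem stmt_8 (δ : ℝ) (hδ : 0 < δ) (M : ℝ × ℝ → ℝ)
    (hM_smooth : ContDiff ℝ (⊤ : ℕ∞) M)
    (hM_convex : ConvexOn ℝ Set.univ M)
    (hM_max : ∀ u v : ℝ, δ ≤ |u - v| → M (u, v) = max u v)
    (hM_shift : ∀ u v a : ℝ, M (u + a, v + a) = M (u, v) + a)
    (hM_symm : ∀ u v : ℝ, M (u, v) = M (v, u))
    (N : ℕ) (hN : 2 ≤ N)
    (Φ : (Fin N → ℝ) → ℝ)
    (hΦ : ∀ ρ : Fin N → ℝ,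
      Φ ρ = ∑ i, Real.exp ((∑ j ∈ Finset.univ.erase i, M (2 * ρ i, 2 * ρ j)) + 2 * ρ i))
    (μ : (Fin N → ℝ) → Fin N → ℝ)
    (hμ : ∀ (ρ : Fin N → ℝ) (j : Fin N), μ ρ j = fderiv ℝ Φ ρ (Pi.single j 1))
    (ρ : Fin N → ℝ) (hρ : Monotone ρ) :
    ∀ k j : Fin N, k < j →
      (2 * (N : ℝ)) ^ (-(1 / (2 * (N : ℝ)))) * Real.exp (-δ) *
          (μ ρ j / μ ρ k) ^ (1 / (2 * (N : ℝ))) ≤ Real.exp (ρ j - ρ k) ∧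
      Real.exp (ρ j - ρ k) ≤
        (2 * (N : ℝ)) ^ ((1 : ℝ) / 2) * Real.exp ((N : ℝ) * δ) *
          (μ ρ j / μ ρ k) ^ ((1 : ℝ) / 2) :=
  stmt_8_general δ hδ M hM_smooth hM_convex hM_max hM_shift hM_symm N Φ hΦ μ hμ ρ hρ
end

section
/- Let n ≥ 1, let P_ℤ ⊂ ℤ^n be a finite set whose convex hull has nonempty interior in ℝ^n, let ν : P_ℤ → ℝ, let δ' ≥ 0, and let m : (P_ℤ → ℝ) → ℝ be a concave function satisfying m(u + a·𝟙) = m(u) + a for all a ∈ ℝ and min_α u(α) − δ' ≤ m(u) ≤ min_α u(α) for all u. For (ξ, η) ∈ ℝ^n × ℝ define μ_α(ξ,η) = η − ⟨α, ξ⟩ + ν(α) for each α ∈ P_ℤ, and H(ξ,η) = Σ_{α ∈ P_ℤ} μ_α(ξ,η) − |P_ℤ| · m((μ_α(ξ,η))_{α∈P_ℤ}). Then: (i) H(ξ,η) = H(ξ,η') for all η, η' ∈ ℝ (H depends only on ξ); (ii) H is a convex function of (ξ,η); (iii) H ≥ 0 everywhere; (iv) there exist constants c > 0 and C > 0 such that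 c‖ξ‖ − C ≤ H(ξ,η) ≤ C(‖ξ‖ + 1) for all (ξ,η) (H is proper with linear growth in ξ). -/
open scoped RealInnerProductSpace

/-!
Write `u = (μ_α(ξ,η))_α`, so that `H = Σ_α (u_α − m u)`. Every term is nonnegative because
`m u ≤ min u`, and every term is at most `max u − min u + δ'` because `m u ≥ min u − δ'`; hence `H`
lies between the oscillation `max u − min u` and `|P_ℤ|·(max u − min u + δ')`. The oscillation of
`α ↦ ν(α) − ⟨α, ξ⟩` is `O(‖ξ‖ + 1)`, and it is at least `ε‖ξ‖ − O(1)` when the convex hull of `P_ℤ`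
contains a ball of radius `ε`: the linear functional `⟨·, ξ⟩` takes its extreme values over the
hull at points of `P_ℤ`, and varies by `ε‖ξ‖` across the ball. Convexity holds because `u`
depends affinely on `(ξ, η)` and `m` is concave.
-/

section Excess

variable {ι : Type*} [Fintype ι] {m : (ι → ℝ) → ℝ}

def excess (m : (ι → ℝ) → ℝ) (u : ι → ℝ) : ℝ :=
  ∑ i, u i - Fintype.card ι * m u

lemma excess_eq_sum_sub (u : ι → ℝ) : excess m u = ∑ i, (u i - m u) := by
  simp [excess, Finset.sum_sub_distrib]

lemma excess_add_const (hm : ∀ (u : ι → ℝ) (a : ℝ), m (fun i => u i + a) = m u + a)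
    (u : ι → ℝ) (a : ℝ) : excess m (fun i => u i + a) = excess m u := by
  simp only [excess_eq_sum_sub, hm, add_sub_add_right_eq_sub]

lemma convexOn_excess (hm : ConcaveOn ℝ Set.univ m) : ConvexOn ℝ Set.univ (excess m) := by
  have hsum : ConvexOn ℝ Set.univ fun u : ι → ℝ => ∑ i, u i :=
    (∑ i, LinearMap.proj (R := ℝ) (φ := fun _ : ι => ℝ) i).convexOn convex_univ |>.congr
      fun u _ => by simp
  exact hsum.sub (hm.smul (Nat.cast_nonneg _))

lemma excess_nonneg (hm : ∀ u i, m u ≤ u i) (u : ι → ℝ) : 0 ≤ excess m u := by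
  rw [excess_eq_sum_sub]
  exact Finset.sum_nonneg fun k _ => sub_nonneg.2 (hm u k)

lemma sub_le_excess (hm : ∀ u i, m u ≤ u i) (u : ι → ℝ) (i j : ι) :
    u i - u j ≤ excess m u := by
  rw [excess_eq_sum_sub]
  calc u i - u j ≤ u i - m u := by linarith [hm u j]
    _ ≤ ∑ k, (u k - m u) :=
      Finset.single_le_sum (fun k _ => sub_nonneg.2 (hm u k)) (Finset.mem_univ i)

lemma excess_le {u : ι → ℝ} {δ D : ℝ} (hm : ∃ k, u k - δ ≤ m u) (hD : ∀ i k, u i - u k ≤ D) :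
    excess m u ≤ Fintype.card ι * (D + δ) := by
  obtain ⟨k, hk⟩ := hm
  rw [excess_eq_sum_sub, ← nsmul_eq_mul, ← Finset.card_univ]
  exact Finset.sum_le_card_nsmul _ _ _ fun i _ => by linarith [hD i k]

end Excess

lemma exists_pos_mul_norm_le_inner_sub {E ι : Type*} [NormedAddCommGroup E]
    [InnerProductSpace ℝ E] {α : ι → E} (h : (interior (convexHull ℝ (Set.range α))).Nonempty) :
    ∃ ε > 0, ∀ ξ : E, ∃ j k, ε * ‖ξ‖ ≤ ⟪α j - α k, ξ⟫ := by
  obtain ⟨x₀, hx₀⟩ := h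
  obtain ⟨ε, hε, hball⟩ := Metric.isOpen_iff.1 isOpen_interior x₀ hx₀
  have hmem : ∀ w : E, ‖w‖ < ε → x₀ + w ∈ convexHull ℝ (Set.range α) := fun w hw =>
    interior_subset (hball (by simpa [dist_eq_norm] using hw))
  refine ⟨ε, hε, fun ξ => ?_⟩
  set v : E := (ε / 2 * ‖ξ‖⁻¹) • ξ
  have hv : ‖v‖ < ε := by
    rw [norm_smul, Real.norm_eq_abs, abs_of_nonneg (by positivity), mul_assoc]
    rcases eq_or_ne ‖ξ‖ 0 with h | h
    · simp [h, hε]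
    · rw [inv_mul_cancel₀ h]; linarith
  have hvξ : ⟪ξ, v⟫ = ε / 2 * ‖ξ‖ := by
    rw [real_inner_smul_right, real_inner_self_eq_norm_sq]
    rcases eq_or_ne ‖ξ‖ 0 with h | h
    · simp [h]
    · field_simp
  obtain ⟨_, ⟨j, rfl⟩, hj⟩ := ((innerSL ℝ ξ).toLinearMap.convexOn convex_univ)
    |>.exists_ge_of_mem_convexHull (Set.subset_univ _) (hmem v hv)
  obtain ⟨_, ⟨k, rfl⟩, hk⟩ := ((innerSL ℝ ξ).toLinearMap.concaveOn convex_univ)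
    |>.exists_le_of_mem_convexHull (Set.subset_univ _) (hmem (-v) (by rwa [norm_neg]))
  refine ⟨j, k, ?_⟩
  simp only [ContinuousLinearMap.coe_coe, innerSL_apply_apply, inner_add_right,
    inner_neg_right] at hj hk
  rw [real_inner_comm, inner_sub_right]
  linarith

lemma exists_forall_norm_sub_le_and_abs_sub_le {E ι : Type*} [SeminormedAddCommGroup E]
    [Finite ι] [Nonempty ι] (α : ι → E) (ν : ι → ℝ) :
    ∃ K, 0 ≤ K ∧ ∀ i k, ‖α i - α k‖ ≤ K ∧ |ν i - ν k| ≤ K := by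
  obtain ⟨K, hK⟩ := Metric.isBounded_iff.1 (Set.finite_range fun i => (α i, ν i)).isBounded
  obtain ⟨j⟩ := ‹Nonempty ι›
  refine ⟨K, dist_nonneg.trans (hK ⟨j, rfl⟩ ⟨j, rfl⟩), fun i k => ?_⟩
  have := hK ⟨i, rfl⟩ ⟨k, rfl⟩
  rwa [Prod.dist_eq, max_le_iff, dist_eq_norm, Real.dist_eq] at this

section AffineFamily

variable {E ι : Type*} [NormedAddCommGroup E] [InnerProductSpace ℝ E] (α : ι → E) (ν : ι → ℝ)

lemma ConvexOn.comp_sub_inner_add {F : (ι → ℝ) → ℝ} (hF : ConvexOn ℝ Set.univ F) :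
    ConvexOn ℝ Set.univ fun p : E × ℝ => F fun j => p.2 - ⟪α j, p.1⟫ + ν j := by
  let L : E × ℝ →ₗ[ℝ] ι → ℝ := LinearMap.pi fun j =>
    LinearMap.snd ℝ E ℝ - (innerSL ℝ (α j)).toLinearMap ∘ₗ LinearMap.fst ℝ E ℝ
  refine ((hF.translate_right ν).comp_linearMap L).congr fun p _ => ?_
  simp only [Function.comp_apply]
  congr 1
  funext j
  simp only [L, LinearMap.pi_apply, LinearMap.sub_apply, LinearMap.snd_apply, LinearMap.coe_comp,
    Function.comp_apply, LinearMap.coe_fst, ContinuousLinearMap.toLinearMap_innerSL_apply,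
    coe_innerₛₗ_apply, Pi.add_apply]
  ring

lemma sub_inner_add_sub_le {K : ℝ} (hK : ∀ i k, ‖α i - α k‖ ≤ K ∧ |ν i - ν k| ≤ K)
    (ξ : E) (η : ℝ) (i k : ι) :
    (η - ⟪α i, ξ⟫ + ν i) - (η - ⟪α k, ξ⟫ + ν k) ≤ K * (‖ξ‖ + 1) := by
  have := real_inner_le_norm (α k - α i) ξ
  rw [inner_sub_left] at this
  nlinarith [(hK k i).1, (abs_le.1 (hK i k).2).2, norm_nonneg ξ]

end AffineFamily

theorem stmt_13_general (n : ℕ)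
    (ι : Type) [Fintype ι] [Nonempty ι]
    (α : ι → EuclideanSpace ℝ (Fin n))
    (hhull : (interior (convexHull ℝ (Set.range α))).Nonempty)
    (ν : ι → ℝ) (δ' : ℝ) (hδ' : 0 ≤ δ')
    (m : (ι → ℝ) → ℝ) (hm_concave : ConcaveOn ℝ Set.univ m)
    (hm_shift : ∀ (u : ι → ℝ) (a : ℝ), m (fun j => u j + a) = m u + a)
    (hm_min : ∀ u : ι → ℝ,
      Finset.univ.inf' Finset.univ_nonempty u - δ' ≤ m u ∧
        m u ≤ Finset.univ.inf' Finset.univ_nonempty u)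
    (μ : ι → EuclideanSpace ℝ (Fin n) → ℝ → ℝ)
    (hμ : ∀ j ξ η, μ j ξ η = η - ⟪α j, ξ⟫ + ν j)
    (H : EuclideanSpace ℝ (Fin n) → ℝ → ℝ)
    (hH : ∀ ξ η, H ξ η =
      (∑ j, μ j ξ η) - (Fintype.card ι : ℝ) * m fun j => μ j ξ η) :
    (∀ ξ η η', H ξ η = H ξ η') ∧
    ConvexOn ℝ Set.univ (fun p : EuclideanSpace ℝ (Fin n) × ℝ => H p.1 p.2) ∧
    (∀ ξ η, 0 ≤ H ξ η) ∧
    ∃ c C : ℝ, 0 < c ∧ 0 < C ∧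
      ∀ ξ η, c * ‖ξ‖ - C ≤ H ξ η ∧ H ξ η ≤ C * (‖ξ‖ + 1) := by
  obtain rfl : μ = fun j ξ η => η - ⟪α j, ξ⟫ + ν j := by
    funext j ξ η; exact hμ j ξ η
  obtain rfl : H = fun ξ η => excess m fun j => η - ⟪α j, ξ⟫ + ν j := by
    funext ξ η; exact hH ξ η
  dsimp only
  have hm_le : ∀ u i, m u ≤ u i := fun u i =>
    (hm_min u).2.trans (Finset.inf'_le _ (Finset.mem_univ i))
  have hm_ge : ∀ u, ∃ k, u k - δ' ≤ m u := fun u => by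
    obtain ⟨k, -, hk⟩ := Finset.exists_mem_eq_inf' Finset.univ_nonempty u
    exact ⟨k, hk ▸ (hm_min u).1⟩
  obtain ⟨ε, hε, hwidth⟩ := exists_pos_mul_norm_le_inner_sub hhull
  obtain ⟨K, hK0, hK⟩ := exists_forall_norm_sub_le_and_abs_sub_le α ν
  refine ⟨fun ξ η η' => ?_, (convexOn_excess hm_concave).comp_sub_inner_add α ν,
    fun ξ η => excess_nonneg hm_le _, ε, Fintype.card ι * (K + δ') + K + 1, hε, by positivity,
    fun ξ η => ⟨?_, ?_⟩⟩
  · rw [← excess_add_const hm_shift _ (η' - η)]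
    congr 1; funext j; ring
  · obtain ⟨j, k, hjk⟩ := hwidth ξ
    have := sub_le_excess hm_le (fun j => η - ⟪α j, ξ⟫ + ν j) k j
    rw [inner_sub_left] at hjk
    nlinarith [(abs_le.1 (hK k j).2).1]
  · refine (excess_le (hm_ge _) (sub_inner_add_sub_le α ν hK ξ η)).trans ?_
    nlinarith [norm_nonneg ξ, mul_nonneg hK0 (norm_nonneg ξ), mul_nonneg hδ' (norm_nonneg ξ)]

/-- Properties of the wrapping Hamiltonian
`H(ξ,η) = Σ_α μ_α(ξ,η) − |P_ℤ|·m((μ_α(ξ,η))_α)`, where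
`μ_α(ξ,η) = η − ⟨α,ξ⟩ + ν(α)` and `m` is a smoothed minimum:
`H` depends only on `ξ`, is convex, nonnegative, proper and of linear growth. -/
theorem stmt_13 (n : ℕ) (hn : 1 ≤ n)
    (ι : Type) [Fintype ι] [Nonempty ι]
    (α : ι → EuclideanSpace ℝ (Fin n))
    (hα_int : ∀ j i, ∃ z : ℤ, α j i = (z : ℝ))
    (hhull : (interior (convexHull ℝ (Set.range α))).Nonempty)
    (ν : ι → ℝ) (δ' : ℝ) (hδ' : 0 ≤ δ')
    (m : (ι → ℝ) → ℝ) (hm_concave : ConcaveOn ℝ Set.univ m)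
    (hm_shift : ∀ (u : ι → ℝ) (a : ℝ), m (fun j => u j + a) = m u + a)
    (hm_min : ∀ u : ι → ℝ,
      Finset.univ.inf' Finset.univ_nonempty u - δ' ≤ m u ∧
        m u ≤ Finset.univ.inf' Finset.univ_nonempty u)
    (μ : ι → EuclideanSpace ℝ (Fin n) → ℝ → ℝ)
    (hμ : ∀ j ξ η, μ j ξ η = η - ⟪α j, ξ⟫ + ν j)
    (H : EuclideanSpace ℝ (Fin n) → ℝ → ℝ)
    (hH : ∀ ξ η, H ξ η =
      (∑ j, μ j ξ η) - (Fintype.card ι : ℝ) * m fun j => μ j ξ η) :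
    (∀ ξ η η', H ξ η = H ξ η') ∧
    ConvexOn ℝ Set.univ (fun p : EuclideanSpace ℝ (Fin n) × ℝ => H p.1 p.2) ∧
    (∀ ξ η, 0 ≤ H ξ η) ∧
    ∃ c C : ℝ, 0 < c ∧ 0 < C ∧
      ∀ ξ η, c * ‖ξ‖ - C ≤ H ξ η ∧ H ξ η ≤ C * (‖ξ‖ + 1) :=
  stmt_13_general n ι α hhull ν δ' hδ' m hm_concave hm_shift hm_min μ hμ H hH
end

section
/- Let K be the field of Hahn series over ℂ with value group ℝ (series with complex coefficients, real exponents, and well-ordered support), and for nonzero u ∈ K write ord(u) ∈ ℝ for the least exponent in its support. Fix a real λ > 0, a finite nonempty index set A, and a ∈ (K∖{0})^A with ord(a_α) = 0 for all α ∈ A. Let E : A → ((A → K) → K) be a family of maps such that: (i) for every α and every u : A → K, either E_α(u) = 0 or ord(E_α(u)) ≥ λ; and (ii) for every α, every c ≥ 0, and all u, v : A → K such that for each β either u_β = v_β or ord(u_β − v_β) ≥ c, one has either E_α(u) = E_α(v) or ord(E_α(u) − E_α(v)) ≥ c + λ. Then there exists a unique u : A → K such that for every α ∈ A, u_α ≠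 0, ord(u_α) = 0, and u_α · (1 + E_α(u)) = a_α. -/
/-!
Rewrite the system as the fixed-point equation `u = T u`, `T u α = a α * (1 + E α u)⁻¹`. Then
`T` takes values of order `0`, and the hypotheses on `E` say that `T` gains `λ` in precision:
if `u` and `v` agree on all exponents below `c ≥ 0`, then `T u` and `T v` agree below `c + λ`.
Hence the Picard iterates `T^[n+1] 0` agree below `nλ` from step `n` on, and their
coefficientwise limit is again a Hahn series, since below any given exponent its support is
that of a single iterate. This limit is a fixed point, and two fixed points agree below `nλ`
for every `n`, so they coincide.
-/

namespace HahnSeries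

section OrderTop

variable {Γ R : Type*} [LinearOrder Γ] [Zero Γ] {c : Γ}

theorem le_orderTop_iff_eq_zero_or_le_order [Zero R] {x : HahnSeries Γ R} :
    (c : WithTop Γ) ≤ x.orderTop ↔ x = 0 ∨ c ≤ x.order := by
  rcases eq_or_ne x 0 with rfl | hx
  · simp
  · rw [← order_eq_orderTop_of_ne_zero hx, WithTop.coe_le_coe]
    simp [hx]

theorem orderTop_eq_zero_iff [Zero R] {x : HahnSeries Γ R} :
    x.orderTop = 0 ↔ x ≠ 0 ∧ x.order = 0 := by
  rcases eq_or_ne x 0 with rfl | hx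
  · simp
  · rw [← order_eq_orderTop_of_ne_zero hx, WithTop.coe_eq_zero]
    simp [hx]

theorem orderTop_one_add_of_pos [AddMonoidWithOne R] [NeZero (1 : R)] {x : HahnSeries Γ R}
    (hx : 0 < x.orderTop) : (1 + x).orderTop = 0 := by
  rw [orderTop_add_eq_left (by rwa [orderTop_one]), orderTop_one]

end OrderTop

section AgreeBelow

variable {Γ R : Type*} [LinearOrder Γ]

def AgreeBelow [Zero R] (c : Γ) (x y : HahnSeries Γ R) : Prop :=
  ∀ γ < c, x.coeff γ = y.coeff γ

variable {c : Γ}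

theorem AgreeBelow.symm [Zero R] {x y : HahnSeries Γ R} (h : AgreeBelow c x y) :
    AgreeBelow c y x :=
  fun γ hγ => (h γ hγ).symm

theorem AgreeBelow.trans [Zero R] {x y z : HahnSeries Γ R} (hxy : AgreeBelow c x y)
    (hyz : AgreeBelow c y z) : AgreeBelow c x z :=
  fun γ hγ => (hxy γ hγ).trans (hyz γ hγ)

theorem agreeBelow_of_le_orderTop [Zero R] {x y : HahnSeries Γ R} (hx : c ≤ x.orderTop)
    (hy : c ≤ y.orderTop) : AgreeBelow c x y := fun γ hγ => by
  rw [coeff_eq_zero_of_lt_orderTop (lt_of_lt_of_le (WithTop.coe_lt_coe.2 hγ) hx),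
    coeff_eq_zero_of_lt_orderTop (lt_of_lt_of_le (WithTop.coe_lt_coe.2 hγ) hy)]

theorem eq_of_forall_agreeBelow [Zero R] {x y : HahnSeries Γ R} {c : ℕ → Γ}
    (hc : ∀ γ, ∃ n, γ < c n) (h : ∀ n, AgreeBelow (c n) x y) : x = y := by
  ext γ
  obtain ⟨n, hn⟩ := hc γ
  exact h n γ hn

theorem agreeBelow_iff_le_orderTop_sub [AddGroup R] {x y : HahnSeries Γ R} :
    AgreeBelow c x y ↔ (c : WithTop Γ) ≤ (x - y).orderTop := by
  simp only [le_orderTop_iff_forall, WithTop.coe_lt_coe, coeff_sub, sub_eq_zero, AgreeBelow]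

theorem agreeBelow_iff_eq_or_le_order_sub [Zero Γ] [AddGroup R] {x y : HahnSeries Γ R} :
    AgreeBelow c x y ↔ x = y ∨ c ≤ (x - y).order := by
  rw [agreeBelow_iff_le_orderTop_sub, le_orderTop_iff_eq_zero_or_le_order, sub_eq_zero]

end AgreeBelow

section Limit

variable {Γ R : Type*} [LinearOrder Γ] [Zero R] {s : ℕ → HahnSeries Γ R} {c : ℕ → Γ}

theorem coeff_eq_coeff_of_agreeBelow (hs : ∀ m n, m ≤ n → AgreeBelow (c m) (s m) (s n))
    {γ : Γ} {m n : ℕ} (hm : γ < c m) (hn : γ < c n) : (s m).coeff γ = (s n).coeff γ := by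
  rcases le_total m n with h | h
  · exact hs m n h γ hm
  · exact (hs n m h γ hn).symm

noncomputable def limOfAgreeBelow (hc : ∀ γ, ∃ n, γ < c n)
    (hs : ∀ m n, m ≤ n → AgreeBelow (c m) (s m) (s n)) : HahnSeries Γ R where
  coeff γ := (s (hc γ).choose).coeff γ
  isPWO_support' := by
    refine Set.IsWF.isPWO (Set.isWF_iff_no_descending_seq.2 fun f hf hmem => ?_)
    obtain ⟨n, hn⟩ := hc (f 0)
    -- below `f 0`, the support of the limit is contained in the support of `s n`
    refine Set.isWF_iff_no_descending_seq.1 (s n).isWF_support f hf fun k => ?_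
    have hk : f k < c n := (hf.antitone k.zero_le).trans_lt hn
    rw [mem_support, ← coeff_eq_coeff_of_agreeBelow hs (hc (f k)).choose_spec hk]
    exact hmem k

theorem agreeBelow_limOfAgreeBelow (hc : ∀ γ, ∃ n, γ < c n)
    (hs : ∀ m n, m ≤ n → AgreeBelow (c m) (s m) (s n)) (n : ℕ) :
    AgreeBelow (c n) (s n) (limOfAgreeBelow hc hs) :=
  fun _ hγ => coeff_eq_coeff_of_agreeBelow hs hγ (hc _).choose_spec

end Limit

section FixedPoint

variable {Γ R A : Type*} [AddCommGroup Γ] [LinearOrder Γ] [IsOrderedAddMonoid Γ] [Zero R]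
  {lam : Γ} {T : (A → HahnSeries Γ R) → A → HahnSeries Γ R}

theorem agreeBelow_iterate_succ (hlam : 0 ≤ lam)
    (hT0 : ∀ u v β, AgreeBelow 0 (T u β) (T v β))
    (hT : ∀ c, 0 ≤ c → ∀ u v, (∀ β, AgreeBelow c (u β) (v β)) →
      ∀ α, AgreeBelow (c + lam) (T u α) (T v α))
    (n : ℕ) (u v : A → HahnSeries Γ R) (β : A) :
    AgreeBelow (n • lam) (T^[n + 1] u β) (T^[n + 1] v β) := by
  induction n generalizing β with
  | zero => simpa using hT0 u v β
  | succ n ih =>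
    rw [Function.iterate_succ_apply', Function.iterate_succ_apply' _ (n + 1), succ_nsmul]
    exact hT _ (nsmul_nonneg hlam n) _ _ ih β

theorem existsUnique_fixedPoint_of_agreeBelow [Archimedean Γ] (hlam : 0 < lam)
    (hT0 : ∀ u v β, AgreeBelow 0 (T u β) (T v β))
    (hT : ∀ c, 0 ≤ c → ∀ u v, (∀ β, AgreeBelow c (u β) (v β)) →
      ∀ α, AgreeBelow (c + lam) (T u α) (T v α)) :
    ∃! u, T u = u := by
  have hiter := agreeBelow_iterate_succ hlam.le hT0 hT
  have hc : ∀ γ : Γ, ∃ n : ℕ, γ < n • lam := fun γ => exists_lt_nsmul hlam γ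
  have hc' : ∀ γ : Γ, ∃ n : ℕ, γ < (n + 1) • lam := fun γ =>
    (hc γ).imp fun n hn => hn.trans_le (nsmul_le_nsmul_left hlam.le n.le_succ)
  set s : ℕ → A → HahnSeries Γ R := fun n => T^[n + 1] 0 with hs_def
  have hs : ∀ β m n, m ≤ n → AgreeBelow (m • lam) (s m β) (s n β) := by
    intro β m n hmn
    obtain ⟨k, rfl⟩ := Nat.exists_eq_add_of_le hmn
    have : s (m + k) = T^[m + 1] (T^[k] 0) := by
      rw [hs_def, ← Function.iterate_add_apply, Nat.add_right_comm, Nat.add_comm m k]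
    rw [this]
    exact hiter m 0 _ β
  set u : A → HahnSeries Γ R := fun β => limOfAgreeBelow hc (hs β)
  have hu : ∀ n β, AgreeBelow (n • lam) (s n β) (u β) := fun n β =>
    agreeBelow_limOfAgreeBelow hc (hs β) n
  have hfix : T u = u := funext fun β => eq_of_forall_agreeBelow hc' fun n => by
    have hTs : T (s n) = s (n + 1) := (Function.iterate_succ_apply' T (n + 1) 0).symm
    have := hT _ (nsmul_nonneg hlam.le n) u (s n) (fun β => (hu n β).symm) β
    rw [hTs, ← succ_nsmul] at this
    exact this.trans (hu (n + 1) β)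
  refine ⟨u, hfix, fun v hv => funext fun β => eq_of_forall_agreeBelow hc fun n => ?_⟩
  rw [← Function.iterate_fixed hv (n + 1), ← Function.iterate_fixed hfix (n + 1)]
  exact hiter n v u β

end FixedPoint

section Field

variable {Γ F : Type*} [AddCommGroup Γ] [LinearOrder Γ] [IsOrderedAddMonoid Γ] [Field F]
  {x y : HahnSeries Γ F}

theorem orderTop_inv : x⁻¹.orderTop = -x.orderTop :=
  (addVal Γ F).map_inv

theorem orderTop_inv_one_add_sub_inv_one_add (hx : 0 < x.orderTop) (hy : 0 < y.orderTop) :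
    ((1 + x)⁻¹ - (1 + y)⁻¹).orderTop = (x - y).orderTop := by
  have hx0 : 1 + x ≠ 0 := orderTop_ne_top.1 (by simp [orderTop_one_add_of_pos hx])
  have hy0 : 1 + y ≠ 0 := orderTop_ne_top.1 (by simp [orderTop_one_add_of_pos hy])
  rw [inv_sub_inv hx0 hy0, div_eq_mul_inv, orderTop_mul, orderTop_inv, orderTop_mul,
    orderTop_one_add_of_pos hx, orderTop_one_add_of_pos hy, add_sub_add_left_eq_sub, ← neg_sub,
    orderTop_neg]
  simp

end Field

end HahnSeries

open HahnSeries

theorem stmt_17_general (lam : ℝ) (hlam : 0 < lam)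
    (A : Type)
    (a : A → HahnSeries ℝ ℂ) (ha : ∀ α, a α ≠ 0 ∧ (a α).order = 0)
    (E : A → (A → HahnSeries ℝ ℂ) → HahnSeries ℝ ℂ)
    (hE1 : ∀ α u, E α u = 0 ∨ lam ≤ (E α u).order)
    (hE2 : ∀ (α : A) (c : ℝ), 0 ≤ c → ∀ u v : A → HahnSeries ℝ ℂ,
      (∀ β, u β = v β ∨ c ≤ (u β - v β).order) →
      (E α u = E α v ∨ c + lam ≤ (E α u - E α v).order)) :
    ∃! u : A → HahnSeries ℝ ℂ,
      ∀ α, u α ≠ 0 ∧ (u α).order = 0 ∧ u α * (1 + E α u) = a α := by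
  have ha' α : (a α).orderTop = 0 := orderTop_eq_zero_iff.2 (ha α)
  have hE1' α u : 0 < (E α u).orderTop :=
    (WithTop.coe_lt_coe.2 hlam).trans_le (le_orderTop_iff_eq_zero_or_le_order.2 (hE1 α u))
  let T (u : A → HahnSeries ℝ ℂ) α : HahnSeries ℝ ℂ := a α * (1 + E α u)⁻¹
  have hT_orderTop u α : (T u α).orderTop = 0 := by
    simp [T, orderTop_inv, ha', orderTop_one_add_of_pos (hE1' α u)]
  have hT : ∀ c, 0 ≤ c → ∀ u v, (∀ β, AgreeBelow c (u β) (v β)) →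
      ∀ α, AgreeBelow (c + lam) (T u α) (T v α) := by
    intro c hc u v huv α
    have hE := (hE2 α c hc u v fun β => agreeBelow_iff_eq_or_le_order_sub.1 (huv β))
    rw [← agreeBelow_iff_eq_or_le_order_sub, agreeBelow_iff_le_orderTop_sub] at hE
    rwa [agreeBelow_iff_le_orderTop_sub, ← mul_sub, orderTop_mul, ha', zero_add,
      orderTop_inv_one_add_sub_inv_one_add (hE1' α u) (hE1' α v)]
  have hfix_iff u :
      (∀ α, u α ≠ 0 ∧ (u α).order = 0 ∧ u α * (1 + E α u) = a α) ↔ T u = u := by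
    have hne α : 1 + E α u ≠ 0 :=
      orderTop_ne_top.1 (by simp [orderTop_one_add_of_pos (hE1' α u)])
    refine ⟨fun h => funext fun α => ((eq_mul_inv_iff_mul_eq₀ (hne α)).2 (h α).2.2).symm,
      fun h α => ?_⟩
    have hu := congrFun h α
    obtain ⟨hu0, hord⟩ := orderTop_eq_zero_iff.1 (hu ▸ hT_orderTop u α)
    exact ⟨hu0, hord, (eq_mul_inv_iff_mul_eq₀ (hne α)).1 hu.symm⟩
  exact (existsUnique_congr hfix_iff).2 <| existsUnique_fixedPoint_of_agreeBelow hlam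
    (fun u v β => agreeBelow_of_le_orderTop (hT_orderTop u β).ge (hT_orderTop v β).ge) hT

/-- A fixed-point statement over the Hahn series field
`K = HahnSeries ℝ ℂ`: given unitary target coefficients `a_α` (nonzero, of
order `0`) and correction maps `E_α` which raise order by at least `λ > 0` and
are `λ`-contracting, there is a unique solution `u` of the system
`u_α · (1 + E_α(u)) = a_α` with all `u_α` nonzero of order `0`. -/
theorem stmt_17 (lam : ℝ) (hlam : 0 < lam)
    (A : Type) [Fintype A] [Nonempty A]
    (a : A → HahnSeries ℝ ℂ) (ha : ∀ α, a α ≠ 0 ∧ (a α).order = 0)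
    (E : A → (A → HahnSeries ℝ ℂ) → HahnSeries ℝ ℂ)
    (hE1 : ∀ α u, E α u = 0 ∨ lam ≤ (E α u).order)
    (hE2 : ∀ (α : A) (c : ℝ), 0 ≤ c → ∀ u v : A → HahnSeries ℝ ℂ,
      (∀ β, u β = v β ∨ c ≤ (u β - v β).order) →
      (E α u = E α v ∨ c + lam ≤ (E α u - E α v).order)) :
    ∃! u : A → HahnSeries ℝ ℂ,
      ∀ α, u α ≠ 0 ∧ (u α).order = 0 ∧ u α * (1 + E α u) = a α :=
  stmt_17_general lam hlam A a ha E hE1 hE2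
end
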